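/- (Solvability is invariant under Hω-equality.) For all closed λ-terms M and N, if M =ω N then M is solvable if and only if N is solvable. -/

import Mathlib

/-- Untyped λ-terms in de Bruijn representation. -/
inductive Lam : Type
  | var : ℕ → Lam
  | app : Lam → Lam → Lam
  | lam : Lam → Lam
deriving DecidableEq

namespace Lam

/-- Lift (shift) the free variables ≥ d by one. -/
def lift : ℕ → Lam → Lam
  | d, var n => if n < d then var n else var (n + 1)
  | d, app M N => app (lift d M) (lift d N)
  | d, lam M => lam (lift (d + 1) M)

/-- Capture-avoiding substitution of N for the free variable k. -/
def subst : ℕ → Lam → Lam → Lam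
  | k, N, var n => if n = k then N else if k < n then var (n - 1) else var n
  | k, N, app A B => app (subst k N A) (subst k N B)
  | k, N, lam M => lam (subst (k + 1) (lift 0 N) M)

/-- All free variables are < k. -/
def ClosedUnder : ℕ → Lam → Prop
  | k, var n => n < k
  | k, app A B => ClosedUnder k A ∧ ClosedUnder k B
  | k, lam M => ClosedUnder (k + 1) M

/-- A term is closed if it has no free variables. -/
def Closed (M : Lam) : Prop := ClosedUnder 0 M

/-- x occurs free in the term. -/
def FreeIn : ℕ → Lam → Prop
  | x, var n => n = x
  | x, app A B => FreeIn x A ∨ FreeIn x B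
  | x, lam M => FreeIn (x + 1) M

/-- The minimal number of abstractions needed to close the term. -/
def fvBound : Lam → ℕ
  | var n => n + 1
  | app A B => max (fvBound A) (fvBound B)
  | lam M => fvBound M - 1

/-- Iterated abstraction λz₁…zₙ.M. -/
def absN : ℕ → Lam → Lam
  | 0, M => M
  | n + 1, M => lam (absN n M)

/-- The λ-closure of a term: abstraction over all its free variables. -/
def close (M : Lam) : Lam := absN (fvBound M) M

/-- One-step β-reduction (closed under arbitrary contexts). -/
inductive Beta : Lam → Lam → Prop
  | beta (U V) : Beta (app (lam U) V) (subst 0 V U)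
  | appL {M M'} (N) : Beta M M' → Beta (app M N) (app M' N)
  | appR (M) {N N'} : Beta N N' → Beta (app M N) (app M N')
  | lam {M M'} : Beta M M' → Beta (lam M) (lam M')

/-- Many-step β-reduction. -/
def BetaStar : Lam → Lam → Prop := Relation.ReflTransGen Beta

/-- β-conversion. -/
def BetaConv : Lam → Lam → Prop := Relation.EqvGen Beta

def iComb : Lam := lam (var 0)
def omegaComb : Lam := lam (app (var 0) (var 0))
def Omega : Lam := app omegaComb omegaComb
def Kstar : Lam := lam (lam (var 0))

/-- Apply a term to a list of arguments: M N₁ ⋯ Nₖ. -/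
def appList : Lam → List Lam → Lam
  | M, [] => M
  | M, N :: Ns => appList (app M N) Ns

/-- A term is solvable iff its λ-closure applied to some closed terms β-converts to I. -/
def Solvable (M : Lam) : Prop :=
  ∃ Ns : List Lam, (∀ N ∈ Ns, Closed N) ∧ BetaConv (appList (close M) Ns) iComb

/-- One-step weak βΩ-reduction. -/
inductive WBO : Lam → Lam → Prop
  | wbeta (U V) : Closed (app (lam U) V) → WBO (app (lam U) V) (subst 0 V U)
  | womega (M) : Closed M → ¬ Solvable M → M ≠ Omega → WBO M Omega
  | appL {M M'} (N) : WBO M M' → WBO (app M N) (app M' N)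
  | appR (M) {N N'} : WBO N N' → WBO (app M N) (app M N')
  | lam {M M'} : WBO M M' → WBO (lam M) (lam M')

/-- Many-step weak βΩ-reduction. -/
def WBOStar : Lam → Lam → Prop := Relation.ReflTransGen WBO

/-- Weak βΩ-conversion. -/
def WBOConv : Lam → Lam → Prop := Relation.EqvGen WBO

/-- One-step full βΩ-reduction (Ω-contraction allowed on open terms,
unsolvability referring to the λ-closure). -/
inductive BO : Lam → Lam → Prop
  | beta (U V) : BO (app (lam U) V) (subst 0 V U)
  | omega (M) : ¬ Solvable M → M ≠ Omega → BO M Omega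
  | appL {M M'} (N) : BO M M' → BO (app M N) (app M' N)
  | appR (M) {N N'} : BO N N' → BO (app M N) (app M N')
  | lam {M M'} : BO M M' → BO (lam M) (lam M')

/-- Many-step full βΩ-reduction. -/
def BOStar : Lam → Lam → Prop := Relation.ReflTransGen BO

/-- Full βΩ-conversion. -/
def BOConv : Lam → Lam → Prop := Relation.EqvGen BO

/-- A term is in βΩ-normal form iff it admits no βΩ-reduction, i.e. it contains
no β-redex and no unsolvable subterm other than Ω. -/
def BONormal (M : Lam) : Prop := ∀ N, ¬ BO M N

/-- Head weak β-reduction: contraction of the head redex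
λx₁…xₙ.(λx.U)V M₁⋯Mₖ → λx₁…xₙ.([V/x]U)M₁⋯Mₖ with (λx.U)V closed. -/
inductive HeadWBeta : Lam → Lam → Prop
  | head (U V) : Closed (app (lam U) V) → HeadWBeta (app (lam U) V) (subst 0 V U)
  | app {M M'} (N) : (∀ U, M ≠ lam U) → HeadWBeta M M' → HeadWBeta (app M N) (app M' N)
  | lam {M M'} : HeadWBeta M M' → HeadWBeta (lam M) (lam M')

/-- The head variable of the term is the free variable x,
i.e. the term has the form λy₁…yᵣ. x X₁ ⋯ Xₘ. -/
inductive HeadVar : ℕ → Lam → Prop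
  | var (x) : HeadVar x (var x)
  | app {x M} (N) : (∀ U, M ≠ lam U) → HeadVar x M → HeadVar x (app M N)
  | lam {x M} : HeadVar (x + 1) M → HeadVar x (lam M)

/-- Subterm relation. -/
inductive Subterm : Lam → Lam → Prop
  | refl (M) : Subterm M M
  | appL {S M} (N) : Subterm S M → Subterm S (app M N)
  | appR (M) {S N} : Subterm S N → Subterm S (app M N)
  | lam {S M} : Subterm S M → Subterm S (lam M)

/-- A closed term is in weak βΩ head normal form iff it is unsolvable and equal
to Ω, or solvable and without a head weak β-redex. -/
def WHnf (M : Lam) : Prop :=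
  (¬ Solvable M ∧ M = Omega) ∨ (Solvable M ∧ ∀ N, ¬ HeadWBeta M N)

/-- Equality in the theory Hω. -/
inductive HOmega : Lam → Lam → Prop
  | refl (M) : Closed M → HOmega M M
  | wbetaL (U N) : Closed (app (lam U) N) → HOmega (app (lam U) N) (subst 0 N U)
  | wbetaR (U N) : Closed (app (lam U) N) → HOmega (subst 0 N U) (app (lam U) N)
  | unsolvL (M) : Closed M → ¬ Solvable M → HOmega M Omega
  | unsolvR (M) : Closed M → ¬ Solvable M → HOmega Omega M
  | leibnitz (X Y M N) : ClosedUnder 1 X → ClosedUnder 1 Y → Closed M → Closed N →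
      HOmega (subst 0 M X) (subst 0 M Y) → HOmega M N →
      HOmega (subst 0 N X) (subst 0 N Y)
  | omega_rule (P Q) : Closed P → Closed Q →
      (∀ M, Closed M → HOmega (app P M) (app Q M)) → HOmega P Q

/-- The n-fold application fⁿ z in the Church numeral. -/
def churchBody : ℕ → Lam
  | 0 => var 0
  | n + 1 => app (var 1) (churchBody n)

/-- The n-th Church numeral. -/
def church (n : ℕ) : Lam := lam (lam (churchBody n))


/-! ### Section 1: de Bruijn basics -/

theorem lift_var_lt {n d : ℕ} (h : n < d) : lift d (var n) = var n := by
  simp [lift, h]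

theorem lift_var_ge {n d : ℕ} (h : d ≤ n) : lift d (var n) = var (n + 1) := by
  simp [lift]; omega

theorem subst_var_eq {n k : ℕ} (N : Lam) (h : n = k) : subst k N (var n) = N := by
  simp [subst, h]

theorem subst_var_gt {n k : ℕ} (N : Lam) (h : k < n) : subst k N (var n) = var (n - 1) := by
  simp only [subst]
  rw [if_neg (by omega), if_pos h]

theorem subst_var_lt {n k : ℕ} (N : Lam) (h : n < k) : subst k N (var n) = var n := by
  simp only [subst]
  rw [if_neg (by omega), if_neg (by omega)]

theorem cu_mono {k j : ℕ} {M : Lam} (h : ClosedUnder k M) (hkj : k ≤ j) :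
    ClosedUnder j M := by
  induction M generalizing k j with
  | var n => exact lt_of_lt_of_le h hkj
  | app A B ihA ihB => exact ⟨ihA h.1 hkj, ihB h.2 hkj⟩
  | lam M ih => exact ih h (by omega)

theorem lift_eq_of_cu {k d : ℕ} {M : Lam} (h : ClosedUnder k M) (hkd : k ≤ d) :
    lift d M = M := by
  induction M generalizing k d with
  | var n => exact lift_var_lt (by simp only [ClosedUnder] at h; omega)
  | app A B ihA ihB => simp only [lift]; rw [ihA h.1 hkd, ihB h.2 hkd]
  | lam M ih => simp only [lift]; rw [ih h (by omega)]

theorem lift_closed {d : ℕ} {M : Lam} (h : Closed M) : lift d M = M :=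
  lift_eq_of_cu h (Nat.zero_le d)

theorem subst_eq_of_cu {k j : ℕ} {N M : Lam} (h : ClosedUnder k M) (hkj : k ≤ j) :
    subst j N M = M := by
  induction M generalizing k j N with
  | var n => exact subst_var_lt N (by simp only [ClosedUnder] at h; omega)
  | app A B ihA ihB => simp only [subst]; rw [ihA h.1 hkj, ihB h.2 hkj]
  | lam M ih => simp only [subst]; rw [ih h (by omega)]

theorem subst_closed {j : ℕ} {N M : Lam} (h : Closed M) : subst j N M = M :=
  subst_eq_of_cu h (Nat.zero_le j)

theorem cu_lift {k d : ℕ} {M : Lam} (h : ClosedUnder k M) :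
    ClosedUnder (k + 1) (lift d M) := by
  induction M generalizing k d with
  | var n =>
    simp only [ClosedUnder] at h
    simp only [lift]
    by_cases hc : n < d <;> simp only [hc, if_true, if_false, ClosedUnder] <;> omega
  | app A B ihA ihB => exact ⟨ihA h.1, ihB h.2⟩
  | lam M ih => exact ih h

theorem cu_subst {k j : ℕ} {M N : Lam} (hM : ClosedUnder (k + 1) M)
    (hN : ClosedUnder k N) (hjk : j ≤ k) : ClosedUnder k (subst j N M) := by
  induction M generalizing k j N with
  | var n =>
    simp only [ClosedUnder] at hM
    by_cases h1 : n = j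
    · rw [subst_var_eq N h1]; exact hN
    · by_cases h2 : j < n
      · rw [subst_var_gt N h2]; simp only [ClosedUnder]; omega
      · rw [subst_var_lt N (by omega)]; simp only [ClosedUnder]; omega
  | app A B ihA ihB => exact ⟨ihA hM.1 hN hjk, ihB hM.2 hN hjk⟩
  | lam M ih => exact ih hM (cu_lift hN) (by omega)

theorem beta_cu {M M' : Lam} {k : ℕ} (h : Beta M M') (hM : ClosedUnder k M) :
    ClosedUnder k M' := by
  induction h generalizing k with
  | beta U V => exact cu_subst hM.1 hM.2 (Nat.zero_le k)
  | appL N _ ih => exact ⟨ih hM.1, hM.2⟩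
  | appR M _ ih => exact ⟨hM.1, ih hM.2⟩
  | lam _ ih => exact ih hM

theorem fvBound_le_iff {M : Lam} {k : ℕ} : fvBound M ≤ k ↔ ClosedUnder k M := by
  induction M generalizing k with
  | var n => simp only [fvBound, ClosedUnder]; omega
  | app A B ihA ihB => simp only [fvBound, ClosedUnder, max_le_iff, ihA, ihB]
  | lam M ih => simp only [fvBound, ClosedUnder, ← ih]; omega

theorem cu_fv (M : Lam) : ClosedUnder (fvBound M) M := fvBound_le_iff.1 le_rfl

theorem close_eq_of_closed {M : Lam} (h : Closed M) : close M = M := by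
  have : fvBound M = 0 := Nat.le_zero.1 (fvBound_le_iff.2 h)
  simp [close, this, absN]

theorem freeIn_lt {x k : ℕ} {M : Lam} (h : FreeIn x M) (hM : ClosedUnder k M) :
    x < k := by
  induction M generalizing x k with
  | var n => simp only [FreeIn] at h; simp only [ClosedUnder] at hM; omega
  | app A B ihA ihB => cases h with
    | inl h => exact ihA h hM.1
    | inr h => exact ihB h hM.2
  | lam M ih => have := ih h hM; omega

theorem not_freeIn_of_closed {x : ℕ} {M : Lam} (hM : Closed M) : ¬ FreeIn x M :=
  fun h => absurd (freeIn_lt h hM) (by omega)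

/-- lift/subst commutation for closed substituted term. -/
theorem subst_lift_closed {P : Lam} (hP : Closed P) :
    ∀ (M : Lam) (k d : ℕ), d ≤ k → subst (k + 1) P (lift d M) = lift d (subst k P M) := by
  intro M
  induction M with
  | var n =>
    intro k d hdk
    by_cases h1 : n < d
    · rw [lift_var_lt h1, subst_var_lt P (by omega), subst_var_lt P (by omega),
        lift_var_lt h1]
    · rw [lift_var_ge (by omega)]
      by_cases h2 : n = k
      · rw [subst_var_eq P (by omega), subst_var_eq P h2, lift_closed hP]
      · by_cases h3 : k < n
        · rw [subst_var_gt P (by omega), subst_var_gt P h3, lift_var_ge (by omega)]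
          congr 1
          omega
        · rw [subst_var_lt P (by omega), subst_var_lt P (by omega), lift_var_ge (by omega)]
  | app A B ihA ihB =>
    intro k d hdk
    simp only [lift, subst, ihA _ _ hdk, ihB _ _ hdk]
  | lam M ih =>
    intro k d hdk
    simp only [lift, subst, lift_closed hP]
    rw [ih (k + 1) (d + 1) (by omega)]

/-- Substitution commutation when the outer substituted term is closed. -/
theorem subst_subst_closed {P : Lam} (hP : Closed P) :
    ∀ (W M : Lam) (j k : ℕ), j ≤ k →
      subst j (subst k P M) (subst (k + 1) P W) = subst k P (subst j M W) := by
  intro W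
  induction W with
  | var n =>
    intro M j k hjk
    by_cases h1 : n = j
    · rw [subst_var_lt P (by omega), subst_var_eq _ h1, subst_var_eq _ h1]
    · by_cases h2 : j < n
      · rw [subst_var_gt M h2]
        by_cases h3 : n = k + 1
        · rw [subst_var_eq P h3, subst_closed hP, subst_var_eq P (by omega)]
        · by_cases h4 : k + 1 < n
          · rw [subst_var_gt P h4, subst_var_gt _ (by omega), subst_var_gt P (by omega)]
          · rw [subst_var_lt P (by omega), subst_var_gt _ h2, subst_var_lt P (by omega)]
      · rw [subst_var_lt P (by omega), subst_var_lt _ (by omega), subst_var_lt M (by omega),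
          subst_var_lt P (by omega)]
  | app A B ihA ihB =>
    intro M j k hjk
    simp only [subst, ihA _ _ _ hjk, ihB _ _ _ hjk]
  | lam W ih =>
    intro M j k hjk
    simp only [subst, lift_closed hP]
    rw [show lift 0 (subst k P M) = subst (k + 1) P (lift 0 M) from
      (subst_lift_closed hP M k 0 (by omega)).symm]
    rw [ih (lift 0 M) (j + 1) (k + 1) (by omega)]

/-! absN and appList lemmas -/

theorem absN_lam (k : ℕ) (M : Lam) : absN k (lam M) = lam (absN k M) := by
  induction k with
  | zero => rfl
  | succ k ih => simp only [absN, ih]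

theorem cu_absN {k j : ℕ} {M : Lam} (h : ClosedUnder (j + k) M) :
    ClosedUnder j (absN k M) := by
  induction k generalizing j with
  | zero => exact h
  | succ k ih =>
    show ClosedUnder (j + 1) (absN k M)
    exact ih (by rw [show j + 1 + k = j + (k + 1) by omega]; exact h)

theorem closed_absN {k : ℕ} {M : Lam} (h : ClosedUnder k M) : Closed (absN k M) :=
  cu_absN (by simpa using h)

theorem subst_absN {A : Lam} (hA : Closed A) (j n : ℕ) (B : Lam) :
    subst j A (absN n B) = absN n (subst (j + n) A B) := by
  induction n generalizing j with
  | zero => rfl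
  | succ n ih =>
    simp only [absN, subst, lift_closed hA]
    rw [ih (j + 1), show j + 1 + n = j + (n + 1) by omega]

theorem appList_append (M : Lam) (l₁ l₂ : List Lam) :
    appList M (l₁ ++ l₂) = appList (appList M l₁) l₂ := by
  induction l₁ generalizing M with
  | nil => rfl
  | cons A l ih =>
    simp only [List.cons_append, appList]
    exact ih (app M A)

theorem subst_appList (k : ℕ) (N M : Lam) (As : List Lam) :
    subst k N (appList M As) = appList (subst k N M) (As.map (subst k N)) := by
  induction As generalizing M with
  | nil => rfl
  | cons A As ih =>
    simp only [appList, List.map_cons]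
    rw [ih (app M A)]
    rfl

theorem cu_appList {k : ℕ} {M : Lam} {As : List Lam} :
    ClosedUnder k (appList M As) ↔ ClosedUnder k M ∧ ∀ A ∈ As, ClosedUnder k A := by
  induction As generalizing M with
  | nil => simp [appList]
  | cons A As ih =>
    simp only [appList, ih, List.mem_cons]
    constructor
    · rintro ⟨⟨h1, h2⟩, h3⟩
      exact ⟨h1, fun B hB => hB.elim (fun e => e ▸ h2) (h3 B)⟩
    · rintro ⟨h1, h2⟩
      exact ⟨⟨h1, h2 A (Or.inl rfl)⟩, fun B hB => h2 B (Or.inr hB)⟩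
/-! ### Section 2: BetaStar / BetaConv congruences and solvability toolkit -/

theorem bstar_of_beta {M N : Lam} (h : Beta M N) : BetaStar M N :=
  Relation.ReflTransGen.single h

theorem bstar_refl (M : Lam) : BetaStar M M := Relation.ReflTransGen.refl

theorem bstar_trans {M N P : Lam} (h1 : BetaStar M N) (h2 : BetaStar N P) :
    BetaStar M P := Relation.ReflTransGen.trans h1 h2

theorem bstar_map {f : Lam → Lam} (hf : ∀ a b, Beta a b → Beta (f a) (f b))
    {M N : Lam} (h : BetaStar M N) : BetaStar (f M) (f N) :=
  Relation.ReflTransGen.lift f hf M N h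

theorem bstar_appL {M M' : Lam} (N : Lam) (h : BetaStar M M') :
    BetaStar (app M N) (app M' N) :=
  bstar_map (fun _ _ hb => Beta.appL N hb) h

theorem bstar_appR (M : Lam) {N N' : Lam} (h : BetaStar N N') :
    BetaStar (app M N) (app M N') :=
  bstar_map (fun _ _ hb => Beta.appR M hb) h

theorem bstar_lam {M M' : Lam} (h : BetaStar M M') : BetaStar (lam M) (lam M') :=
  bstar_map (fun _ _ hb => Beta.lam hb) h

theorem bstar_appList {M M' : Lam} (As : List Lam) (h : BetaStar M M') :
    BetaStar (appList M As) (appList M' As) := by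
  induction As generalizing M M' with
  | nil => exact h
  | cons A As ih => exact ih (bstar_appL A h)

theorem bconv_refl (M : Lam) : BetaConv M M := Relation.EqvGen.refl M

theorem bconv_symm {M N : Lam} (h : BetaConv M N) : BetaConv N M :=
  Relation.EqvGen.symm _ _ h

theorem bconv_trans {M N P : Lam} (h1 : BetaConv M N) (h2 : BetaConv N P) :
    BetaConv M P := Relation.EqvGen.trans _ _ _ h1 h2

theorem bconv_of_beta {M N : Lam} (h : Beta M N) : BetaConv M N :=
  Relation.EqvGen.rel _ _ h

theorem bconv_of_bstar {M N : Lam} (h : BetaStar M N) : BetaConv M N := by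
  induction h with
  | refl => exact bconv_refl M
  | tail _ hb ih => exact bconv_trans ih (bconv_of_beta hb)

theorem bconv_map {f : Lam → Lam} (hf : ∀ a b, Beta a b → Beta (f a) (f b))
    {M N : Lam} (h : BetaConv M N) : BetaConv (f M) (f N) := by
  induction h with
  | rel a b hab => exact bconv_of_beta (hf a b hab)
  | refl a => exact bconv_refl _
  | symm a b _ ih => exact bconv_symm ih
  | trans a b c _ _ ih1 ih2 => exact bconv_trans ih1 ih2

theorem bconv_appL {M M' : Lam} (N : Lam) (h : BetaConv M M') :
    BetaConv (app M N) (app M' N) :=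
  bconv_map (fun _ _ hb => Beta.appL N hb) h

theorem bconv_appR (M : Lam) {N N' : Lam} (h : BetaConv N N') :
    BetaConv (app M N) (app M N') :=
  bconv_map (fun _ _ hb => Beta.appR M hb) h

theorem bconv_lam {M M' : Lam} (h : BetaConv M M') : BetaConv (lam M) (lam M') :=
  bconv_map (fun _ _ hb => Beta.lam hb) h

theorem bconv_appList {M M' : Lam} (As : List Lam) (h : BetaConv M M') :
    BetaConv (appList M As) (appList M' As) := by
  induction As generalizing M M' with
  | nil => exact h
  | cons A As ih => exact ih (bconv_appL A h)

theorem bstar_cu {M M' : Lam} {k : ℕ} (h : BetaStar M M') (hM : ClosedUnder k M) :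
    ClosedUnder k M' := by
  induction h with
  | refl => exact hM
  | tail _ hb ih => exact beta_cu hb ih

/-- substList: simultaneous-ish substitution used for feeding arguments. -/
def substList : Lam → List Lam → Lam
  | Y, [] => Y
  | Y, A :: σ => substList (subst σ.length A Y) σ

theorem substList_closed {Y : Lam} (σ : List Lam) (h : Closed Y) :
    substList Y σ = Y := by
  induction σ generalizing Y with
  | nil => rfl
  | cons A σ ih => simp only [substList, subst_closed h]; exact ih h

theorem substList_app (A B : Lam) (σ : List Lam) :
    substList (app A B) σ = app (substList A σ) (substList B σ) := by
  induction σ generalizing A B with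
  | nil => rfl
  | cons C σ ih => simp only [substList, subst]; exact ih _ _

theorem substList_appList (M : Lam) (As : List Lam) (σ : List Lam) :
    substList (appList M As) σ = appList (substList M σ) (As.map (substList · σ)) := by
  induction As generalizing M with
  | nil => rfl
  | cons A As ih =>
    simp only [appList, List.map_cons]
    rw [ih (app M A), substList_app]

theorem substList_cu {Y : Lam} {σ : List Lam} (hY : ClosedUnder σ.length Y)
    (hσ : ∀ A ∈ σ, Closed A) : Closed (substList Y σ) := by
  induction σ generalizing Y with
  | nil => exact hY
  | cons A σ ih =>
    simp only [substList]
    refine ih (cu_subst ?_ ?_ le_rfl) (fun B hB => hσ B (List.mem_cons_of_mem A hB))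
    · simpa using hY
    · exact cu_mono (hσ A List.mem_cons_self) (Nat.zero_le _)

theorem substList_var_hit {x : ℕ} {A : Lam} {σ : List Lam} (hA : Closed A)
    (hx : x = σ.length) : substList (var x) (A :: σ) = A := by
  simp only [substList, subst_var_eq A hx]
  exact substList_closed σ hA

theorem substList_var_skip {x : ℕ} {A : Lam} {σ : List Lam} (h : x < σ.length) :
    substList (var x) (A :: σ) = substList (var x) σ := by
  simp only [substList, subst_var_lt A h]

/-- Feeding closed arguments into an iterated abstraction. -/
theorem beta_absN_feed : ∀ (σ : List Lam) (Y : Lam) (rest : List Lam),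
    (∀ A ∈ σ, Closed A) →
    BetaStar (appList (absN σ.length Y) (σ ++ rest)) (appList (substList Y σ) rest) := by
  intro σ
  induction σ with
  | nil => intro Y rest _; exact bstar_refl _
  | cons A σ ih =>
    intro Y rest hσ
    have hA : Closed A := hσ A List.mem_cons_self
    have step : Beta (app (lam (absN σ.length Y)) A) (absN σ.length (subst σ.length A Y)) := by
      have := Beta.beta (absN σ.length Y) A
      rwa [subst_absN hA 0 σ.length Y, Nat.zero_add] at this
    show BetaStar (appList (app (lam (absN σ.length Y)) A) (σ ++ rest)) _
    exact bstar_trans (bstar_appList (σ ++ rest) (bstar_of_beta step))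
      (ih (subst σ.length A Y) rest (fun B hB => hσ B (List.mem_cons_of_mem A hB)))

/-- Padding a solving sequence with extra I arguments. -/
theorem conv_pad {X : Lam} {Ns : List Lam} (h : BetaConv (appList X Ns) iComb) :
    BetaConv (appList X (Ns ++ [iComb])) iComb := by
  rw [appList_append]
  have h1 : BetaConv (app (appList X Ns) iComb) (app iComb iComb) := bconv_appL _ h
  have h2 : Beta (app iComb iComb) iComb := by
    have := Beta.beta (var 0) iComb
    simpa [subst, iComb] using this
  exact bconv_trans (bconv_trans h1 (bconv_of_beta h2)) (bconv_refl _)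

theorem closed_iComb : Closed iComb := by simp [iComb, Closed, ClosedUnder]

theorem conv_pad_many {X : Lam} {Ns : List Lam} (j : ℕ)
    (h : BetaConv (appList X Ns) iComb) :
    BetaConv (appList X (Ns ++ List.replicate j iComb)) iComb := by
  induction j with
  | zero => simpa using h
  | succ j ih =>
    rw [List.replicate_succ', ← List.append_assoc]
    exact conv_pad ih

/-- Solvability characterized at any closure level `k ≥ fvBound M`. -/
theorem solvable_iff_k {M : Lam} {k : ℕ} (hk : fvBound M ≤ k) :
    Solvable M ↔ ∃ Ns : List Lam, (∀ N ∈ Ns, Closed N) ∧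
      BetaConv (appList (absN k M) Ns) iComb := by
  have step : ∀ (Z : Lam), Closed Z →
      ((∃ Ns : List Lam, (∀ N ∈ Ns, Closed N) ∧ BetaConv (appList Z Ns) iComb) ↔
       (∃ Ns : List Lam, (∀ N ∈ Ns, Closed N) ∧ BetaConv (appList (lam Z) Ns) iComb)) := by
    intro Z hZ
    constructor
    · rintro ⟨Ns, hNs, hconv⟩
      refine ⟨iComb :: Ns, ?_, ?_⟩
      · intro N hN
        rcases List.mem_cons.1 hN with h | h
        · exact h ▸ closed_iComb
        · exact hNs N h
      · show BetaConv (appList (app (lam Z) iComb) Ns) iComb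
        have : Beta (app (lam Z) iComb) Z := by
          have := Beta.beta Z iComb
          rwa [subst_closed hZ] at this
        exact bconv_trans (bconv_appList Ns (bconv_of_beta this)) hconv
    · rintro ⟨Ns, hNs, hconv⟩
      cases Ns with
      | nil =>
        refine ⟨[], by simp, ?_⟩
        have h1 : Beta (app (lam Z) iComb) Z := by
          have := Beta.beta Z iComb
          rwa [subst_closed hZ] at this
        have h2 : BetaConv (app (lam Z) iComb) (app iComb iComb) :=
          bconv_appL _ hconv
        have h3 : Beta (app iComb iComb) iComb := by
          have := Beta.beta (var 0) iComb
          simpa [subst, iComb] using this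
        exact bconv_trans (bconv_symm (bconv_of_beta h1))
          (bconv_trans h2 (bconv_of_beta h3))
      | cons A Ns =>
        refine ⟨Ns, fun N hN => hNs N (List.mem_cons_of_mem A hN), ?_⟩
        have h1 : Beta (app (lam Z) A) Z := by
          have := Beta.beta Z A
          rwa [subst_closed hZ] at this
        exact bconv_trans (bconv_symm (bconv_appList Ns (bconv_of_beta h1))) hconv
  induction k, hk using Nat.le_induction with
  | base => exact Iff.rfl
  | succ k hk ih =>
    exact ih.trans (step (absN k M) (closed_absN (fvBound_le_iff.1 hk)))
/-! ### Section 2b: solvability lemmas -/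

theorem beta_absN {M N : Lam} (k : ℕ) (h : Beta M N) : Beta (absN k M) (absN k N) := by
  induction k with
  | zero => exact h
  | succ k ih => exact Beta.lam ih

theorem solvable_beta {M N : Lam} (h : Beta M N) : Solvable M ↔ Solvable N := by
  have hMN : fvBound N ≤ fvBound M := fvBound_le_iff.2 (beta_cu h (cu_fv M))
  rw [solvable_iff_k (le_refl (fvBound M)), solvable_iff_k hMN]
  have hstep : Beta (absN (fvBound M) M) (absN (fvBound M) N) := beta_absN _ h
  constructor
  · rintro ⟨Ns, hNs, hconv⟩
    exact ⟨Ns, hNs, bconv_trans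
      (bconv_symm (bconv_appList Ns (bconv_of_beta hstep))) hconv⟩
  · rintro ⟨Ns, hNs, hconv⟩
    exact ⟨Ns, hNs, bconv_trans (bconv_appList Ns (bconv_of_beta hstep)) hconv⟩

theorem solvable_conv {M N : Lam} (h : BetaConv M N) : Solvable M ↔ Solvable N := by
  induction h with
  | rel a b hab => exact solvable_beta hab
  | refl a => exact Iff.rfl
  | symm a b _ ih => exact ih.symm
  | trans a b c _ _ ih1 ih2 => exact ih1.trans ih2

theorem solvable_bstar {M N : Lam} (h : BetaStar M N) : Solvable M ↔ Solvable N :=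
  solvable_conv (bconv_of_bstar h)

theorem solvable_lam_iff {M : Lam} : Solvable (lam M) ↔ Solvable M := by
  have h1 : fvBound (lam M) ≤ fvBound M := by simp [fvBound]
  rw [solvable_iff_k h1, solvable_iff_k (show fvBound M ≤ fvBound M + 1 by omega)]
  rw [absN_lam]
  exact Iff.rfl

theorem solvable_closed_iff {X : Lam} (hX : Closed X) :
    Solvable X ↔ ∃ Ns : List Lam, (∀ N ∈ Ns, Closed N) ∧
      BetaConv (appList X Ns) iComb := by
  have h0 : fvBound X ≤ 0 := fvBound_le_iff.2 hX
  exact solvable_iff_k h0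

/-- A closed-instance decomposition of solvability: a term applied to arguments. -/
theorem solvable_feed_closed {Y : Lam} (k : ℕ) (hk : fvBound Y ≤ k) (hs : Solvable Y) :
    ∃ (σ rest : List Lam), σ.length = k ∧ (∀ A ∈ σ, Closed A) ∧
      (∀ A ∈ rest, Closed A) ∧
      BetaConv (appList (substList Y σ) rest) iComb := by
  rw [solvable_iff_k hk] at hs
  obtain ⟨Ns, hNs, hconv⟩ := hs
  -- pad to length ≥ k
  set Ns' := Ns ++ List.replicate (k - Ns.length) iComb with hNs'def
  have hlen : k ≤ Ns'.length := by simp [hNs'def]; omega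
  have hNs'cl : ∀ A ∈ Ns', Closed A := by
    intro A hA
    rcases List.mem_append.1 hA with h | h
    · exact hNs A h
    · rw [List.eq_of_mem_replicate h]; exact closed_iComb
  have hconv' : BetaConv (appList (absN k Y) Ns') iComb := conv_pad_many _ hconv
  refine ⟨Ns'.take k, Ns'.drop k, by simp [hlen], ?_, ?_, ?_⟩
  · exact fun A hA => hNs'cl A (List.mem_of_mem_take hA)
  · exact fun A hA => hNs'cl A (List.mem_of_mem_drop hA)
  · have hsplit : Ns' = Ns'.take k ++ Ns'.drop k := (List.take_append_drop k Ns').symm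
    rw [hsplit] at hconv'
    have hfeed := beta_absN_feed (Ns'.take k) Y (Ns'.drop k)
      (fun A hA => hNs'cl A (List.mem_of_mem_take hA))
    rw [List.length_take, min_eq_left hlen] at hfeed
    exact bconv_trans (bconv_symm (bconv_of_bstar hfeed)) hconv'

theorem solvable_app_head {M N : Lam} (h : Solvable (app M N)) : Solvable M := by
  set k := fvBound (app M N) with hk
  have hM : fvBound M ≤ k := by simp [hk, fvBound]
  have hN : fvBound N ≤ k := by simp [hk, fvBound]
  obtain ⟨σ, rest, hσlen, hσcl, hrestcl, hconv⟩ := solvable_feed_closed k le_rfl h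
  rw [substList_app] at hconv
  have hMσcl : Closed (substList M σ) := substList_cu (hσlen ▸ fvBound_le_iff.1 hM) hσcl
  have hNσcl : Closed (substList N σ) := substList_cu (hσlen ▸ fvBound_le_iff.1 hN) hσcl
  rw [solvable_iff_k hM]
  refine ⟨σ ++ (substList N σ :: rest), ?_, ?_⟩
  · intro A hA
    rcases List.mem_append.1 hA with h1 | h1
    · exact hσcl A h1
    · rcases List.mem_cons.1 h1 with h2 | h2
      · exact h2 ▸ hNσcl
      · exact hrestcl A h2
  · have hfeed := beta_absN_feed σ M (substList N σ :: rest) hσcl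
    rw [hσlen] at hfeed
    exact bconv_trans (bconv_of_bstar hfeed) hconv

theorem solvable_appList_head {M : Lam} {As : List Lam}
    (h : Solvable (appList M As)) : Solvable M := by
  induction As generalizing M with
  | nil => exact h
  | cons A As ih => exact solvable_app_head (ih h)

theorem substList_var_prefix_skip {x : ℕ} (l σ' : List Lam) (h : x < σ'.length) :
    substList (var x) (l ++ σ') = substList (var x) σ' := by
  induction l with
  | nil => rfl
  | cons B l ih =>
    rw [List.cons_append, substList_var_skip (by simp; omega), ih]

theorem closed_absN_iComb (m : ℕ) : Closed (absN m iComb) :=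
  closed_absN (cu_mono closed_iComb (Nat.zero_le m))

/-- Any term with a variable at the head of its spine is solvable. -/
theorem solvable_var_spine (x : ℕ) (As : List Lam) :
    Solvable (appList (var x) As) := by
  set Y := appList (var x) As with hY
  set k := fvBound Y with hk
  have hcu : ClosedUnder k Y := cu_fv Y
  have hx : x < k := by
    have := (cu_appList.1 hcu).1
    simpa [ClosedUnder] using this
  set m := As.length with hm
  set σ : List Lam := List.replicate (k - 1 - x) iComb ++
    (absN m iComb :: List.replicate x iComb) with hσ
  have hσcl : ∀ A ∈ σ, Closed A := by
    intro A hA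
    rw [hσ] at hA
    rcases List.mem_append.1 hA with h | h
    · rw [List.eq_of_mem_replicate h]; exact closed_iComb
    · rcases List.mem_cons.1 h with h | h
      · exact h ▸ closed_absN_iComb m
      · rw [List.eq_of_mem_replicate h]; exact closed_iComb
  have hσlen : σ.length = k := by
    simp only [hσ, List.length_append, List.length_replicate, List.length_cons]
    omega
  have hvar : substList (var x) σ = absN m iComb := by
    rw [hσ, substList_var_prefix_skip _ _ (by simp)]
    exact substList_var_hit (closed_absN_iComb m) (by simp)
  have hsubY : substList Y σ = appList (absN m iComb)
      (As.map (substList · σ)) := by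
    rw [hY, substList_appList, hvar]
  have hargscl : ∀ A ∈ As.map (substList · σ), Closed A := by
    intro A hA
    obtain ⟨B, hB, rfl⟩ := List.mem_map.1 hA
    refine substList_cu ?_ hσcl
    rw [hσlen]
    exact (cu_appList.1 hcu).2 B hB
  have hsel : ∀ (args : List Lam), (∀ A ∈ args, Closed A) →
      BetaStar (appList (absN args.length iComb) args) iComb := by
    intro args hargs
    have := beta_absN_feed args iComb [] hargs
    rwa [substList_closed args closed_iComb, List.append_nil] at this
  have hfeed := beta_absN_feed σ Y [] hσcl
  rw [hσlen, List.append_nil] at hfeed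
  rw [solvable_iff_k (le_of_eq hk.symm)]
  refine ⟨σ, hσcl, ?_⟩
  refine bconv_trans (bconv_of_bstar hfeed) ?_
  rw [hsubY]
  have hlen2 : (As.map (substList · σ)).length = m := by simp [hm]
  rw [← hlen2]
  exact bconv_of_bstar (hsel _ hargscl)

/-- Head swap: if P and Q are applicatively related (closed arguments), then
a P-headed application is solvable only if the Q-headed one is. -/
theorem head_swap {P Q : Lam} (hP : Closed P) (hQ : Closed Q)
    (hyp : ∀ As : List Lam, (∀ A ∈ As, Closed A) →
      Solvable (appList P As) → Solvable (appList Q As))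
    (Ds : List Lam) (h : Solvable (appList P Ds)) : Solvable (appList Q Ds) := by
  set kP := fvBound (appList P Ds) with hkP
  set kQ := fvBound (appList Q Ds) with hkQ
  set k := max kP kQ with hk
  obtain ⟨σ, rest, hσlen, hσcl, hrestcl, hconv⟩ :=
    solvable_feed_closed k (le_max_left _ _) h
  rw [substList_appList, substList_closed σ hP] at hconv
  set Ds' := Ds.map (substList · σ) with hDs'
  have hDs'cl : ∀ A ∈ Ds', Closed A := by
    intro A hA
    obtain ⟨B, hB, rfl⟩ := List.mem_map.1 hA
    refine substList_cu ?_ hσcl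
    rw [hσlen]
    exact (cu_appList.1 (cu_mono (cu_fv (appList P Ds)) (le_max_left _ _))).2 B hB
  have hclP : Closed (appList P (Ds' ++ rest)) := by
    refine cu_appList.2 ⟨hP, fun A hA => ?_⟩
    rcases List.mem_append.1 hA with h1 | h1
    · exact hDs'cl A h1
    · exact hrestcl A h1
  have hsolP : Solvable (appList P (Ds' ++ rest)) := by
    rw [solvable_closed_iff hclP]
    exact ⟨[], by simp, by rw [appList_append]; exact hconv⟩
  have hsolQ : Solvable (appList Q (Ds' ++ rest)) := by
    refine hyp _ ?_ hsolP
    intro A hA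
    rcases List.mem_append.1 hA with h1 | h1
    · exact hDs'cl A h1
    · exact hrestcl A h1
  -- now reconstruct solvability of `appList Q Ds`
  have hclQside : Closed (appList Q (Ds' ++ rest)) := by
    refine cu_appList.2 ⟨hQ, fun A hA => ?_⟩
    rcases List.mem_append.1 hA with h1 | h1
    · exact hDs'cl A h1
    · exact hrestcl A h1
  rw [solvable_closed_iff hclQside] at hsolQ
  obtain ⟨Fs, hFscl, hFconv⟩ := hsolQ
  rw [solvable_iff_k (show kQ ≤ k from le_max_right _ _)]
  refine ⟨σ ++ (rest ++ Fs), ?_, ?_⟩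
  · intro A hA
    rcases List.mem_append.1 hA with h1 | h1
    · exact hσcl A h1
    · rcases List.mem_append.1 h1 with h2 | h2
      · exact hrestcl A h2
      · exact hFscl A h2
  · have hfeed := beta_absN_feed σ (appList Q Ds) (rest ++ Fs) hσcl
    rw [hσlen] at hfeed
    refine bconv_trans (bconv_of_bstar hfeed) ?_
    rw [substList_appList, substList_closed σ hQ, ← hDs']
    rw [appList_append, ← appList_append Q Ds' rest]
    exact hFconv
/-! ### Section 3: head reduction -/

/-- Size of a term (for termination measures). -/
def siz : Lam → ℕ
  | var _ => 1
  | app A B => siz A + siz B + 1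
  | lam M => siz M + 1

theorem subst_lam_closed {P : Lam} (hP : Closed P) (k : ℕ) (W : Lam) :
    subst k P (lam W) = lam (subst (k + 1) P W) := by
  simp only [subst, lift_closed hP]

/-- Head β-reduction (one step), without closedness restrictions. -/
inductive HB : Lam → Lam → Prop
  | beta (U V) : HB (app (lam U) V) (subst 0 V U)
  | app {M M'} (N) : (∀ U, M ≠ lam U) → HB M M' → HB (app M N) (app M' N)
  | lam {M M'} : HB M M' → HB (lam M) (lam M')

/-- Head normal forms. -/
inductive IsHnf : Lam → Prop
  | var (x) : IsHnf (var x)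
  | app {M} (N) : IsHnf M → (∀ U, M ≠ lam U) → IsHnf (app M N)
  | lam {M} : IsHnf M → IsHnf (lam M)

/-- n-step head reduction. -/
inductive HBN : ℕ → Lam → Lam → Prop
  | zero (M) : HBN 0 M M
  | succ {n M M' M''} : HB M M' → HBN n M' M'' → HBN (n + 1) M M''

theorem hb_beta {M N : Lam} (h : HB M N) : Beta M N := by
  induction h with
  | beta U V => exact Beta.beta U V
  | app N _ _ ih => exact Beta.appL N ih
  | lam _ ih => exact Beta.lam ih

theorem hb_det {M N₁ N₂ : Lam} (h1 : HB M N₁) (h2 : HB M N₂) : N₁ = N₂ := by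
  induction h1 generalizing N₂ with
  | beta U V =>
    cases h2 with
    | beta => rfl
    | app N hne _ => exact absurd rfl (hne U)
  | app N hne h ih =>
    cases h2 with
    | beta U V => exact absurd rfl (hne U)
    | app _ _ h' => rw [ih h']
  | lam h ih =>
    cases h2 with
    | lam h' => rw [ih h']

theorem isHnf_no_hb {M N : Lam} (h : IsHnf M) : ¬ HB M N := by
  intro hstep
  induction hstep with
  | beta U V => cases h with
    | app _ _ hne => exact absurd rfl (hne U)
  | app N hne _ ih => cases h with
    | app _ hM _ => exact ih hM
  | lam _ ih => cases h with
    | lam hM => exact ih hM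

theorem hnf_or_step : ∀ M : Lam, IsHnf M ∨ ∃ M', HB M M' := by
  intro M
  induction M with
  | var n => exact Or.inl (IsHnf.var n)
  | app A B ihA ihB =>
    rcases ihA with hA | ⟨A', hA'⟩
    · by_cases hlam : ∃ U, A = lam U
      · obtain ⟨U, rfl⟩ := hlam
        exact Or.inr ⟨subst 0 B U, HB.beta U B⟩
      · exact Or.inl (IsHnf.app B hA (fun U hU => hlam ⟨U, hU⟩))
    · by_cases hlam : ∃ U, A = lam U
      · obtain ⟨U, rfl⟩ := hlam
        exact Or.inr ⟨subst 0 B U, HB.beta U B⟩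
      · exact Or.inr ⟨app A' B, HB.app B (fun U hU => hlam ⟨U, hU⟩) hA'⟩
  | lam M ih =>
    rcases ih with h | ⟨M', hM'⟩
    · exact Or.inl (IsHnf.lam h)
    · exact Or.inr ⟨lam M', HB.lam hM'⟩

theorem hb_appList {M M' : Lam} (h : HB M M') (hne : ∀ U, M ≠ lam U) :
    ∀ As : List Lam, HB (appList M As) (appList M' As) := by
  intro As
  induction As generalizing M M' with
  | nil => exact h
  | cons A As ih =>
    exact ih (HB.app A hne h) (fun U hU => by cases hU)

theorem hbn_split {n : ℕ} {M H M₁ : Lam} (h : HBN n M H) (hH : IsHnf H)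
    (hstep : HB M M₁) : ∃ n', n = n' + 1 ∧ HBN n' M₁ H := by
  cases h with
  | zero => exact absurd hstep (isHnf_no_hb hH)
  | succ h1 h2 =>
    rw [hb_det hstep h1]
    exact ⟨_, rfl, h2⟩

theorem isHnf_lam_inv {B : Lam} (h : IsHnf (lam B)) : IsHnf B := by
  cases h with
  | lam h => exact h

theorem hbn_lam {n : ℕ} {B H : Lam} (h : HBN n (lam B) H) (hH : IsHnf H) :
    ∃ H₁, H = lam H₁ ∧ HBN n B H₁ ∧ IsHnf H₁ := by
  induction n generalizing B with
  | zero =>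
    cases h with
    | zero => exact ⟨B, rfl, HBN.zero B, isHnf_lam_inv hH⟩
  | succ n ih =>
    cases h with
    | succ h1 h2 =>
      cases h1 with
      | lam h1' =>
        obtain ⟨H₁, rfl, h3, h4⟩ := ih h2
        exact ⟨H₁, rfl, HBN.succ h1' h3, h4⟩

theorem isHnf_cases {H : Lam} (h : IsHnf H) :
    (∃ B, H = lam B ∧ IsHnf B) ∨ ∃ x As, H = appList (var x) As := by
  induction h with
  | var x => exact Or.inr ⟨x, [], rfl⟩
  | app N hM hne ih =>
    rcases ih with ⟨B, rfl, _⟩ | ⟨x, As, rfl⟩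
    · exact absurd rfl (hne B)
    · refine Or.inr ⟨x, As ++ [N], ?_⟩
      rw [appList_append]
      rfl
  | lam hM ih => exact Or.inl ⟨_, rfl, hM⟩

theorem solvable_hnf {H : Lam} (h : IsHnf H) : Solvable H := by
  induction h with
  | var x => exact solvable_var_spine x []
  | app N hM hne ih =>
    rcases isHnf_cases hM with ⟨B, rfl, _⟩ | ⟨x, As, rfl⟩
    · exact absurd rfl (hne B)
    · have : app (appList (var x) As) N = appList (var x) (As ++ [N]) := by
        rw [appList_append]; rfl
      rw [this]
      exact solvable_var_spine x _
  | lam hM ih => exact solvable_lam_iff.2 ih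

theorem closed_hnf_is_lam {P : Lam} (hP : Closed P) (h : IsHnf P) :
    ∃ B, P = lam B := by
  rcases isHnf_cases h with ⟨B, rfl, _⟩ | ⟨x, As, rfl⟩
  · exact ⟨B, rfl⟩
  · exfalso
    have := (cu_appList.1 hP).1
    simp [ClosedUnder] at this

theorem hb_omega : HB Omega Omega := by
  have h := HB.beta (app (var 0) (var 0)) omegaComb
  have : subst 0 omegaComb (app (var 0) (var 0)) = Omega := by
    simp [subst, Omega]
  rwa [this] at h

theorem hbn_omega {n : ℕ} {H : Lam} (h : HBN n Omega H) : H = Omega := by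
  induction n generalizing H with
  | zero => cases h with | zero => rfl
  | succ n ih =>
    cases h with
    | succ h1 h2 =>
      rw [hb_det h1 hb_omega] at h2
      exact ih h2

theorem not_isHnf_omega : ¬ IsHnf Omega := fun h => isHnf_no_hb h hb_omega
/-! ### Section 4a: types and typing contexts -/

/-- Non-idempotent intersection types. -/
inductive Ty : Type
  | atom : Ty
  | arr : List Ty → Ty → Ty

/-- Typing contexts: multiset of types for each de Bruijn index. -/
abbrev Ctx := ℕ → Multiset Ty

/-- The context with just τ at position x. -/
def sing (x : ℕ) (τ : Ty) : Ctx := fun n => if n = x then {τ} else 0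

/-- Insert a multiset at position d, shifting everything above. -/
def insC (d : ℕ) (m : Multiset Ty) (Γ : Ctx) : Ctx :=
  fun n => if n < d then Γ n else if n = d then m else Γ (n - 1)

/-- Remove position k, shifting everything above down. -/
def remC (k : ℕ) (Γ : Ctx) : Ctx := fun n => if n < k then Γ n else Γ (n + 1)

theorem ctx_add_apply (Γ Δ : Ctx) (n : ℕ) : (Γ + Δ) n = Γ n + Δ n := rfl

theorem ctx_zero_apply (n : ℕ) : (0 : Ctx) n = 0 := rfl

theorem insC_add (d : ℕ) (m₁ m₂ : Multiset Ty) (Γ₁ Γ₂ : Ctx) :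
    insC d (m₁ + m₂) (Γ₁ + Γ₂) = insC d m₁ Γ₁ + insC d m₂ Γ₂ := by
  funext n
  simp only [insC, ctx_add_apply]
  split_ifs <;> simp

theorem insC_zero_zero (d : ℕ) : insC d 0 (0 : Ctx) = 0 := by
  funext n
  simp only [insC, ctx_zero_apply]
  split_ifs <;> rfl

theorem remC_add (k : ℕ) (Γ₁ Γ₂ : Ctx) :
    remC k (Γ₁ + Γ₂) = remC k Γ₁ + remC k Γ₂ := by
  funext n
  simp only [remC, ctx_add_apply]
  split_ifs <;> rfl

theorem remC_zero_ctx (k : ℕ) : remC k (0 : Ctx) = 0 := by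
  funext n
  simp only [remC, ctx_zero_apply]
  split_ifs <;> rfl

theorem remC_insC (k : ℕ) (m : Multiset Ty) (Γ : Ctx) :
    remC k (insC k m Γ) = Γ := by
  funext n
  simp only [remC, insC]
  split_ifs <;> first | rfl | (exfalso; omega) | (congr 1; omega)

theorem remC_zero_insC_succ (d : ℕ) (m : Multiset Ty) (Γ : Ctx) :
    remC 0 (insC (d + 1) m Γ) = insC d m (remC 0 Γ) := by
  funext n
  simp only [remC, insC]
  split_ifs <;> first | rfl | (exfalso; omega) | (congr 1; omega)

theorem remC_succ_insC_zero (k : ℕ) (m : Multiset Ty) (Γ : Ctx) :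
    remC (k + 1) (insC 0 m Γ) = insC 0 m (remC k Γ) := by
  funext n
  simp only [remC, insC]
  by_cases h0 : n = 0
  · subst h0
    rw [if_pos (by omega), if_neg (by omega), if_pos rfl, if_neg (by omega), if_pos rfl]
  · by_cases h1 : n < k + 1
    · rw [if_pos h1, if_neg (by omega), if_neg h0, if_neg (by omega), if_neg h0,
        if_pos (by omega)]
    · rw [if_neg h1, if_neg (by omega), if_neg (by omega), if_neg (by omega), if_neg h0,
        if_neg (by omega)]
      congr 1
      omega

theorem insC_swap (k : ℕ) (m m' : Multiset Ty) (Γ : Ctx) :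
    insC (k + 1) m (insC 0 m' Γ) = insC 0 m' (insC k m Γ) := by
  funext n
  simp only [insC]
  split_ifs <;> first | rfl | (exfalso; omega) | (congr 1; omega)

theorem sing_apply_self (x : ℕ) (τ : Ty) : sing x τ x = {τ} := by simp [sing]

theorem sing_apply_ne {x n : ℕ} (τ : Ty) (h : n ≠ x) : sing x τ n = 0 := by
  simp [sing, h]

theorem insC_apply_self (d : ℕ) (m : Multiset Ty) (Γ : Ctx) : insC d m Γ d = m := by
  simp [insC]

theorem insC_apply_succ_zero (m : Multiset Ty) (Γ : Ctx) (n : ℕ) :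
    insC 0 m Γ (n + 1) = Γ n := by
  simp [insC]

theorem insC_zero_sing_lt {x d : ℕ} (τ : Ty) (h : x < d) :
    insC d 0 (sing x τ) = sing x τ := by
  funext n
  simp only [insC, sing]
  split_ifs <;> first | rfl | omega

theorem insC_zero_sing_ge {x d : ℕ} (τ : Ty) (h : d ≤ x) :
    insC d 0 (sing x τ) = sing (x + 1) τ := by
  funext n
  simp only [insC, sing]
  split_ifs <;> first | rfl | omega

theorem remC_sing_self (k : ℕ) (τ : Ty) : remC k (sing k τ) = 0 := by
  funext n
  simp only [remC, sing, ctx_zero_apply]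
  split_ifs <;> first | rfl | omega

theorem remC_sing_gt {k n : ℕ} (τ : Ty) (h : k < n) :
    remC k (sing n τ) = sing (n - 1) τ := by
  funext j
  simp only [remC, sing]
  split_ifs <;> first | rfl | omega

theorem remC_sing_lt {k n : ℕ} (τ : Ty) (h : n < k) :
    remC k (sing n τ) = sing n τ := by
  funext j
  simp only [remC, sing]
  split_ifs <;> first | rfl | omega

theorem ctx_eta (Γ : Ctx) : Γ = insC 0 (Γ 0) (remC 0 Γ) := by
  funext n
  rcases n with _ | n
  · simp [insC]
  · simp [insC, remC]

theorem insC_singleton_list (k : ℕ) (τ : Ty) :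
    insC k (↑([τ] : List Ty)) (0 : Ctx) = sing k τ := by
  funext n
  simp only [insC, sing, ctx_zero_apply]
  have : (↑([τ] : List Ty) : Multiset Ty) = {τ} := rfl
  rw [this]
  split_ifs <;> first | rfl | (exfalso; omega) | (congr 1; omega)

theorem insC_nil_list (k : ℕ) :
    insC k (↑([] : List Ty)) (0 : Ctx) = 0 := by
  have : (↑([] : List Ty) : Multiset Ty) = 0 := rfl
  rw [this, insC_zero_zero]

theorem insC_zero_add (d : ℕ) (Γ₁ Γ₂ : Ctx) :
    insC d 0 (Γ₁ + Γ₂) = insC d 0 Γ₁ + insC d 0 Γ₂ := by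
  funext n
  simp only [insC, ctx_add_apply]
  split_ifs <;> simp
/-! ### Section 4b: the typing judgment -/

/-- Sized non-idempotent intersection typing. `Sum.inl τ`: term typing,
`Sum.inr L`: a bag of typings of the same term. -/
inductive TT : ℕ → Ctx → Lam → (Ty ⊕ List Ty) → Prop
  | var (x : ℕ) (τ : Ty) : TT 1 (sing x τ) (var x) (Sum.inl τ)
  | app {s t : ℕ} {Γ Δ : Ctx} {M N : Lam} {L : List Ty} {τ : Ty} :
      TT s Γ M (Sum.inl (Ty.arr L τ)) → TT t Δ N (Sum.inr L) →
      TT (s + t + 1) (Γ + Δ) (app M N) (Sum.inl τ)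
  | lam {s : ℕ} {Γ : Ctx} {M : Lam} {L : List Ty} {τ : Ty} :
      TT s (insC 0 (↑L) Γ) M (Sum.inl τ) →
      TT (s + 1) Γ (lam M) (Sum.inl (Ty.arr L τ))
  | nil (N : Lam) : TT 0 0 N (Sum.inr [])
  | cons {s t : ℕ} {Γ Δ : Ctx} {N : Lam} {τ : Ty} {L : List Ty} :
      TT s Γ N (Sum.inl τ) → TT t Δ N (Sum.inr L) →
      TT (s + t) (Γ + Δ) N (Sum.inr (τ :: L))

def Typable (M : Lam) : Prop := ∃ s Γ τ, TT s Γ M (Sum.inl τ)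

/-! inversion lemmas -/

theorem inv_nil {t : ℕ} {Δ : Ctx} {N : Lam} (h : TT t Δ N (Sum.inr [])) :
    t = 0 ∧ Δ = 0 := by
  cases h with
  | nil => exact ⟨rfl, rfl⟩

theorem inv_cons {t : ℕ} {Δ : Ctx} {N : Lam} {τ : Ty} {L : List Ty}
    (h : TT t Δ N (Sum.inr (τ :: L))) :
    ∃ s₁ Δ₁ s₂ Δ₂, t = s₁ + s₂ ∧ Δ = Δ₁ + Δ₂ ∧
      TT s₁ Δ₁ N (Sum.inl τ) ∧ TT s₂ Δ₂ N (Sum.inr L) := by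
  cases h with
  | cons h1 h2 => exact ⟨_, _, _, _, rfl, rfl, h1, h2⟩

theorem inv_var {s : ℕ} {Γ : Ctx} {x : ℕ} {τ : Ty} (h : TT s Γ (var x) (Sum.inl τ)) :
    s = 1 ∧ Γ = sing x τ := by
  cases h with
  | var => exact ⟨rfl, rfl⟩

theorem inv_app {s : ℕ} {Γ : Ctx} {M N : Lam} {τ : Ty}
    (h : TT s Γ (app M N) (Sum.inl τ)) :
    ∃ s₁ t Γ₁ Γ₂ L, s = s₁ + t + 1 ∧ Γ = Γ₁ + Γ₂ ∧
      TT s₁ Γ₁ M (Sum.inl (Ty.arr L τ)) ∧ TT t Γ₂ N (Sum.inr L) := by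
  cases h with
  | app h1 h2 => exact ⟨_, _, _, _, _, rfl, rfl, h1, h2⟩

theorem inv_lam {s : ℕ} {Γ : Ctx} {M : Lam} {τ : Ty}
    (h : TT s Γ (lam M) (Sum.inl τ)) :
    ∃ s₁ L τ₀, τ = Ty.arr L τ₀ ∧ s = s₁ + 1 ∧
      TT s₁ (insC 0 (↑L) Γ) M (Sum.inl τ₀) := by
  cases h with
  | lam h1 => exact ⟨_, _, _, rfl, rfl, h1⟩

/-! operations on bags -/

theorem tl_append {t₁ t₂ : ℕ} {Δ₁ Δ₂ : Ctx} {N : Lam} {L₁ L₂ : List Ty}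
    (h1 : TT t₁ Δ₁ N (Sum.inr L₁)) (h2 : TT t₂ Δ₂ N (Sum.inr L₂)) :
    TT (t₁ + t₂) (Δ₁ + Δ₂) N (Sum.inr (L₁ ++ L₂)) := by
  induction L₁ generalizing t₁ Δ₁ with
  | nil =>
    obtain ⟨rfl, rfl⟩ := inv_nil h1
    simpa using h2
  | cons τ L ih =>
    obtain ⟨s₁, Δ₁', s₂, Δ₂', rfl, rfl, hτ, hL⟩ := inv_cons h1
    have := TT.cons hτ (ih hL)
    rw [show s₁ + (s₂ + t₂) = s₁ + s₂ + t₂ by omega, ← add_assoc] at this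
    exact this

theorem tl_append_inv {t : ℕ} {Δ : Ctx} {N : Lam} {L₁ L₂ : List Ty}
    (h : TT t Δ N (Sum.inr (L₁ ++ L₂))) :
    ∃ t₁ Δ₁ t₂ Δ₂, t = t₁ + t₂ ∧ Δ = Δ₁ + Δ₂ ∧
      TT t₁ Δ₁ N (Sum.inr L₁) ∧ TT t₂ Δ₂ N (Sum.inr L₂) := by
  induction L₁ generalizing t Δ with
  | nil => exact ⟨0, 0, t, Δ, by omega, by simp, TT.nil N, h⟩
  | cons τ L ih =>
    obtain ⟨s₁, Δ₁', s₂, Δ₂', rfl, rfl, hτ, hL⟩ := inv_cons h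
    obtain ⟨t₁, Θ₁, t₂, Θ₂, rfl, rfl, g1, g2⟩ := ih hL
    exact ⟨s₁ + t₁, Δ₁' + Θ₁, t₂, Θ₂, by omega, by rw [add_assoc], TT.cons hτ g1, g2⟩

theorem tl_perm {t : ℕ} {Δ : Ctx} {N : Lam} {L L' : List Ty}
    (h : TT t Δ N (Sum.inr L)) (hp : L.Perm L') : TT t Δ N (Sum.inr L') := by
  induction hp generalizing t Δ with
  | nil => exact h
  | cons τ hp ih =>
    obtain ⟨s₁, Δ₁, s₂, Δ₂, rfl, rfl, hτ, hL⟩ := inv_cons h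
    exact TT.cons hτ (ih hL)
  | swap τ₁ τ₂ L =>
    obtain ⟨s₁, Δ₁, s₂, Δ₂, rfl, rfl, hτ, hL⟩ := inv_cons h
    obtain ⟨u₁, Θ₁, u₂, Θ₂, rfl, rfl, gτ, gL⟩ := inv_cons hL
    have := TT.cons gτ (TT.cons hτ gL)
    rw [show u₁ + (s₁ + u₂) = s₁ + (u₁ + u₂) by omega,
      show Θ₁ + (Δ₁ + Θ₂) = Δ₁ + (Θ₁ + Θ₂) from by
        rw [← add_assoc, ← add_assoc, add_comm Θ₁ Δ₁]] at this
    exact this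
  | trans _ _ ih1 ih2 => exact ih2 (ih1 h)

theorem tl_split {t : ℕ} {Δ : Ctx} {N : Lam} {L : List Ty} {m₁ m₂ : Multiset Ty}
    (h : TT t Δ N (Sum.inr L)) (hm : (↑L : Multiset Ty) = m₁ + m₂) :
    ∃ (L₁ L₂ : List Ty) (t₁ : ℕ) (Δ₁ : Ctx) (t₂ : ℕ) (Δ₂ : Ctx), (↑L₁ : Multiset Ty) = m₁ ∧ (↑L₂ : Multiset Ty) = m₂ ∧
      t = t₁ + t₂ ∧ Δ = Δ₁ + Δ₂ ∧
      TT t₁ Δ₁ N (Sum.inr L₁) ∧ TT t₂ Δ₂ N (Sum.inr L₂) := by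
  set L₁ := m₁.toList with hL₁
  set L₂ := m₂.toList with hL₂
  have hc₁ : (↑L₁ : Multiset Ty) = m₁ := m₁.coe_toList
  have hc₂ : (↑L₂ : Multiset Ty) = m₂ := m₂.coe_toList
  have hperm : L.Perm (L₁ ++ L₂) := by
    rw [← Multiset.coe_eq_coe, ← Multiset.coe_add, hc₁, hc₂]
    exact hm
  have h' := tl_perm h hperm
  obtain ⟨t₁, Δ₁, t₂, Δ₂, rfl, rfl, g1, g2⟩ := tl_append_inv h'
  exact ⟨L₁, L₂, t₁, Δ₁, t₂, Δ₂, hc₁, hc₂, rfl, rfl, g1, g2⟩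

/-! lift typing -/

theorem lift_typing {s : ℕ} {Γ : Ctx} {M : Lam} {ix : Ty ⊕ List Ty}
    (h : TT s Γ M ix) : ∀ d, TT s (insC d 0 Γ) (lift d M) ix := by
  induction h with
  | var x τ =>
    intro d
    by_cases hxd : x < d
    · rw [lift_var_lt hxd, insC_zero_sing_lt τ hxd]
      exact TT.var x τ
    · rw [lift_var_ge (by omega), insC_zero_sing_ge τ (by omega)]
      exact TT.var (x + 1) τ
  | app h1 h2 ih1 ih2 =>
    intro d
    rw [show (0 : Multiset Ty) = 0 + 0 from by simp, insC_add]
    exact TT.app (ih1 d) (ih2 d)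
  | lam h1 ih =>
    intro d
    refine TT.lam ?_
    rw [← insC_swap]
    exact ih (d + 1)
  | nil N =>
    intro d
    rw [insC_zero_zero]
    exact TT.nil _
  | cons h1 h2 ih1 ih2 =>
    intro d
    rw [show (0 : Multiset Ty) = 0 + 0 from by simp, insC_add]
    exact TT.cons (ih1 d) (ih2 d)

/-! unlift typing -/

theorem unlift_typing : ∀ {s : ℕ} {Γ' : Ctx} {X : Lam} {ix : Ty ⊕ List Ty},
    TT s Γ' X ix → ∀ {d : ℕ} {M : Lam}, X = lift d M →
    ∃ Γ, Γ' = insC d 0 Γ ∧ TT s Γ M ix := by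
  intro s Γ' X ix h
  induction h with
  | var x τ =>
    intro d M heq
    cases M with
    | var y =>
      rcases Nat.lt_or_ge y d with hyd | hyd
      · rw [lift_var_lt hyd] at heq
        obtain rfl := var.inj heq
        first
          | exact ⟨sing x τ, (insC_zero_sing_lt τ hyd).symm, TT.var x τ⟩
          | exact ⟨sing y τ, (insC_zero_sing_lt τ hyd).symm, TT.var y τ⟩
      · rw [lift_var_ge hyd] at heq
        obtain rfl := var.inj heq
        exact ⟨sing y τ, (insC_zero_sing_ge τ hyd).symm, TT.var y τ⟩
    | app A B => simp [lift] at heq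
    | lam A => simp [lift] at heq
  | @app s t Γ Δ M₀ N₀ L τ h1 h2 ih1 ih2 =>
    intro d M heq
    cases M with
    | var y =>
      by_cases hyd : y < d
      · rw [lift_var_lt hyd] at heq; cases heq
      · rw [lift_var_ge (by omega)] at heq; cases heq
    | app A B =>
      simp only [lift] at heq
      obtain ⟨e1, e2⟩ := app.inj heq
      obtain ⟨Γ₀, rfl, g1⟩ := ih1 e1
      obtain ⟨Δ₀, rfl, g2⟩ := ih2 e2
      exact ⟨Γ₀ + Δ₀, (insC_zero_add d Γ₀ Δ₀).symm, TT.app g1 g2⟩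
    | lam A => simp [lift] at heq
  | @lam s Γ M₀ L τ h1 ih =>
    intro d M heq
    cases M with
    | var y =>
      by_cases hyd : y < d
      · rw [lift_var_lt hyd] at heq; cases heq
      · rw [lift_var_ge (by omega)] at heq; cases heq
    | app A B => simp [lift] at heq
    | lam A =>
      simp only [lift] at heq
      obtain e1 := lam.inj heq
      obtain ⟨Γ₀, hΓ₀, g1⟩ := ih (d := d + 1) e1
      refine ⟨remC 0 Γ₀, ?_, ?_⟩
      · have := congrArg (remC 0) hΓ₀
        rwa [remC_insC, remC_zero_insC_succ] at this
      · refine TT.lam ?_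
        have hΓ00 : Γ₀ 0 = ↑L := by
          have := congrArg (fun Θ => Θ 0) hΓ₀
          simpa [insC] using this.symm
        rw [← hΓ00, ← ctx_eta]
        exact g1
  | nil N =>
    intro d M heq
    exact ⟨0, (insC_zero_zero d).symm, TT.nil M⟩
  | cons h1 h2 ih1 ih2 =>
    intro d M heq
    obtain ⟨Γ₀, rfl, g1⟩ := ih1 heq
    obtain ⟨Δ₀, rfl, g2⟩ := ih2 heq
    exact ⟨Γ₀ + Δ₀, (insC_zero_add d Γ₀ Δ₀).symm, TT.cons g1 g2⟩
/-! ### Section 4c: substitution and anti-substitution for typing -/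

theorem list_eq_singleton {L : List Ty} {τ : Ty} (h : (↑L : Multiset Ty) = {τ}) :
    L = [τ] := by
  rwa [Multiset.coe_eq_singleton] at h

theorem list_eq_nil {L : List Ty} (h : (↑L : Multiset Ty) = 0) : L = [] := by
  rwa [Multiset.coe_eq_zero] at h

theorem subst_typing : ∀ {s : ℕ} {Γ : Ctx} {M : Lam} {ix : Ty ⊕ List Ty},
    TT s Γ M ix → ∀ {k : ℕ} {L : List Ty} {t : ℕ} {Δ : Ctx} {N : Lam},
    Γ k = ↑L → TT t Δ N (Sum.inr L) →
    ∃ s' ≤ s + t, TT s' (remC k Γ + Δ) (subst k N M) ix := by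
  intro s Γ M ix h
  induction h with
  | var x τ =>
    intro k L t Δ N hk hN
    by_cases hxk : x = k
    · subst hxk
      rw [sing_apply_self] at hk
      obtain rfl := list_eq_singleton hk.symm
      obtain ⟨t₁, Δ₁, t₂, Δ₂, rfl, rfl, hτ, hnil⟩ := inv_cons hN
      obtain ⟨rfl, rfl⟩ := inv_nil hnil
      refine ⟨t₁, by omega, ?_⟩
      rw [subst_var_eq N rfl, remC_sing_self]
      simpa using hτ
    · rw [sing_apply_ne τ (Ne.symm (by omega))] at hk
      obtain rfl := list_eq_nil hk.symm
      obtain ⟨rfl, rfl⟩ := inv_nil hN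
      by_cases hlt : x < k
      · refine ⟨1, by omega, ?_⟩
        rw [subst_var_lt N hlt, remC_sing_lt τ hlt]
        simpa using TT.var x τ
      · refine ⟨1, by omega, ?_⟩
        rw [subst_var_gt N (by omega), remC_sing_gt τ (by omega)]
        simpa using TT.var (x - 1) τ
  | @app s t₀ Γ Δ₀ M₀ N₀ L₀ τ h1 h2 ih1 ih2 =>
    intro k L t Δ N hk hN
    rw [ctx_add_apply] at hk
    obtain ⟨L₁, L₂, t₁, Δ₁, t₂, Δ₂, hc₁, hc₂, rfl, rfl, g1, g2⟩ := tl_split hN hk.symm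
    obtain ⟨s₁', hs₁, d1⟩ := ih1 hc₁.symm g1
    obtain ⟨s₂', hs₂, d2⟩ := ih2 hc₂.symm g2
    refine ⟨s₁' + s₂' + 1, by omega, ?_⟩
    have := TT.app d1 d2
    rw [show remC k Γ + Δ₁ + (remC k Δ₀ + Δ₂) = remC k (Γ + Δ₀) + (Δ₁ + Δ₂) from by
      rw [remC_add]; abel] at this
    exact this
  | @lam s Γ M₀ L₀ τ h1 ih =>
    intro k L t Δ N hk hN
    have hk' : insC 0 (↑L₀) Γ (k + 1) = ↑L := by
      rw [insC_apply_succ_zero]; exact hk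
    have hNlift := lift_typing hN 0
    obtain ⟨s', hs', d⟩ := ih hk' hNlift
    refine ⟨s' + 1, by omega, ?_⟩
    rw [remC_succ_insC_zero] at d
    have hctx : insC 0 (↑L₀) (remC k Γ) + insC 0 0 Δ = insC 0 (↑L₀) (remC k Γ + Δ) := by
      rw [← insC_add]; simp
    rw [hctx] at d
    exact TT.lam d
  | nil N₀ =>
    intro k L t Δ N hk hN
    rw [ctx_zero_apply] at hk
    obtain rfl := list_eq_nil hk.symm
    obtain ⟨rfl, rfl⟩ := inv_nil hN
    refine ⟨0, le_rfl, ?_⟩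
    rw [remC_zero_ctx]
    simpa using TT.nil (subst k N N₀)
  | @cons s t₀ Γ Δ₀ N₀ τ L₀ h1 h2 ih1 ih2 =>
    intro k L t Δ N hk hN
    rw [ctx_add_apply] at hk
    obtain ⟨L₁, L₂, t₁, Δ₁, t₂, Δ₂, hc₁, hc₂, rfl, rfl, g1, g2⟩ := tl_split hN hk.symm
    obtain ⟨s₁', hs₁, d1⟩ := ih1 hc₁.symm g1
    obtain ⟨s₂', hs₂, d2⟩ := ih2 hc₂.symm g2
    refine ⟨s₁' + s₂', by omega, ?_⟩
    have := TT.cons d1 d2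
    rw [show remC k Γ + Δ₁ + (remC k Δ₀ + Δ₂) = remC k (Γ + Δ₀) + (Δ₁ + Δ₂) from by
      rw [remC_add]; abel] at this
    exact this

/-- inl-part of the anti-substitution statement for a fixed term. -/
def ASinl (M : Lam) : Prop :=
  ∀ {s : ℕ} {Γ' : Ctx} {τ : Ty} {k : ℕ} {N : Lam},
    TT s Γ' (subst k N M) (Sum.inl τ) →
    ∃ (L : List Ty) (Γ Δ : Ctx) (s₁ t : ℕ), Γ' = Γ + Δ ∧
      TT s₁ (insC k (↑L) Γ) M (Sum.inl τ) ∧ TT t Δ N (Sum.inr L)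

def ASinr (M : Lam) : Prop :=
  ∀ {t' : ℕ} {Γ' : Ctx} {L' : List Ty} {k : ℕ} {N : Lam},
    TT t' Γ' (subst k N M) (Sum.inr L') →
    ∃ (L : List Ty) (Γ Δ : Ctx) (t₁ t₂ : ℕ), Γ' = Γ + Δ ∧
      TT t₁ (insC k (↑L) Γ) M (Sum.inr L') ∧ TT t₂ Δ N (Sum.inr L)

theorem asinr_of_asinl {M : Lam} (hM : ASinl M) : ASinr M := by
  intro t' Γ' L' k N h
  induction L' generalizing t' Γ' with
  | nil =>
    obtain ⟨rfl, rfl⟩ := inv_nil h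
    refine ⟨[], 0, 0, 0, 0, by simp, ?_, TT.nil N⟩
    rw [insC_nil_list]
    exact TT.nil M
  | cons τ L' ih =>
    obtain ⟨s₁, Δ₁, s₂, Δ₂, rfl, rfl, hτ, hL⟩ := inv_cons h
    obtain ⟨La, Γa, Δa, sa, ta, rfl, da, ea⟩ := hM hτ
    obtain ⟨Lb, Γb, Δb, sb, tb, rfl, db, eb⟩ := ih hL
    refine ⟨La ++ Lb, Γa + Γb, Δa + Δb, sa + sb, ta + tb, by abel, ?_, tl_append ea eb⟩
    have := TT.cons da db
    rwa [← insC_add, Multiset.coe_add] at this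

theorem antisubst : ∀ M : Lam, ASinl M := by
  intro M
  induction M with
  | var n =>
    intro s Γ' τ k N h
    by_cases hnk : n = k
    · subst hnk
      rw [subst_var_eq N rfl] at h
      refine ⟨[τ], 0, Γ', 1, s, by simp, ?_, ?_⟩
      · rw [insC_singleton_list]
        exact TT.var n τ
      · simpa using TT.cons h (TT.nil N)
    · by_cases hlt : n < k
      · rw [subst_var_lt N hlt] at h
        obtain ⟨rfl, rfl⟩ := inv_var h
        refine ⟨[], sing n τ, 0, 1, 0, by simp, ?_, TT.nil N⟩
        rw [show (↑([] : List Ty) : Multiset Ty) = 0 from rfl]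
        rw [insC_zero_sing_lt τ hlt]
        exact TT.var n τ
      · rw [subst_var_gt N (by omega)] at h
        obtain ⟨rfl, rfl⟩ := inv_var h
        refine ⟨[], sing (n - 1) τ, 0, 1, 0, by simp, ?_, TT.nil N⟩
        rw [show (↑([] : List Ty) : Multiset Ty) = 0 from rfl]
        rw [insC_zero_sing_ge τ (by omega), show n - 1 + 1 = n by omega]
        exact TT.var n τ
  | app A B ihA ihB =>
    intro s Γ' τ k N h
    obtain ⟨s₁, t₀, Γ₁, Γ₂, L₀, rfl, rfl, h1, h2⟩ := inv_app h
    obtain ⟨La, Γa, Δa, sa, ta, rfl, da, ea⟩ := ihA h1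
    obtain ⟨Lb, Γb, Δb, tb₁, tb₂, rfl, db, eb⟩ := asinr_of_asinl ihB h2
    refine ⟨La ++ Lb, Γa + Γb, Δa + Δb, sa + tb₁ + 1, ta + tb₂, by abel, ?_,
      tl_append ea eb⟩
    have := TT.app da db
    rwa [← insC_add, Multiset.coe_add] at this
  | lam A ihA =>
    intro s Γ' τ k N h
    rw [show subst k N (lam A) = lam (subst (k + 1) (lift 0 N) A) from rfl] at h
    obtain ⟨s₁, L₀, τ₀, rfl, rfl, h1⟩ := inv_lam h
    obtain ⟨L, Γ₀, Δ₀, sa, ta, hctx, da, ea⟩ := ihA h1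
    obtain ⟨Δ, rfl, eN⟩ := unlift_typing ea rfl
    have hΓ00 : Γ₀ 0 = ↑L₀ := by
      have := congrArg (fun Θ => Θ 0) hctx
      simp only [ctx_add_apply] at this
      rw [insC_apply_self 0 (↑L₀) Γ', insC_apply_self 0 0 Δ] at this
      simpa using this.symm
    refine ⟨L, remC 0 Γ₀, Δ, sa + 1, ta, ?_, ?_, eN⟩
    · have := congrArg (remC 0) hctx
      rwa [remC_insC, remC_add, remC_insC] at this
    · refine TT.lam ?_
      rw [← insC_swap, ← hΓ00, ← ctx_eta]
      exact da
/-! ### Section 4d: subject reduction/expansion, head termination -/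

theorem tt_inr_of_inl {X Y : Lam}
    (h : ∀ {s : ℕ} {Γ : Ctx} {τ : Ty}, TT s Γ X (Sum.inl τ) → ∃ s', TT s' Γ Y (Sum.inl τ)) :
    ∀ {t : ℕ} {Δ : Ctx} {L : List Ty}, TT t Δ X (Sum.inr L) →
      ∃ t', TT t' Δ Y (Sum.inr L) := by
  intro t Δ L hX
  induction L generalizing t Δ with
  | nil =>
    obtain ⟨rfl, rfl⟩ := inv_nil hX
    exact ⟨0, TT.nil Y⟩
  | cons τ L ih =>
    obtain ⟨s₁, Δ₁, s₂, Δ₂, rfl, rfl, hτ, hL⟩ := inv_cons hX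
    obtain ⟨s₁', g1⟩ := h hτ
    obtain ⟨s₂', g2⟩ := ih hL
    exact ⟨s₁' + s₂', TT.cons g1 g2⟩

theorem sr_beta {M M' : Lam} (hb : Beta M M') :
    ∀ {s : ℕ} {Γ : Ctx} {τ : Ty}, TT s Γ M (Sum.inl τ) →
      ∃ s', TT s' Γ M' (Sum.inl τ) := by
  induction hb with
  | beta U V =>
    intro s Γ τ h
    obtain ⟨s₁, t, Γ₁, Γ₂, L, rfl, rfl, h1, h2⟩ := inv_app h
    obtain ⟨s₀, L', τ₀, heq, rfl, h3⟩ := inv_lam h1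
    obtain ⟨e1, e2⟩ := Ty.arr.inj heq
    subst e1; subst e2
    obtain ⟨s', _, d⟩ := subst_typing h3 (insC_apply_self 0 (↑L) Γ₁) h2
    rw [remC_insC] at d
    exact ⟨s', d⟩
  | appL N hb ih =>
    intro s Γ τ h
    obtain ⟨s₁, t, Γ₁, Γ₂, L, rfl, rfl, h1, h2⟩ := inv_app h
    obtain ⟨s₁', g1⟩ := ih h1
    exact ⟨s₁' + t + 1, TT.app g1 h2⟩
  | appR M hb ih =>
    intro s Γ τ h
    obtain ⟨s₁, t, Γ₁, Γ₂, L, rfl, rfl, h1, h2⟩ := inv_app h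
    obtain ⟨t', g2⟩ := tt_inr_of_inl (fun hx => ih hx) h2
    exact ⟨s₁ + t' + 1, TT.app h1 g2⟩
  | lam hb ih =>
    intro s Γ τ h
    obtain ⟨s₀, L', τ₀, rfl, rfl, h3⟩ := inv_lam h
    obtain ⟨s', g⟩ := ih h3
    exact ⟨s' + 1, TT.lam g⟩

theorem se_beta {M M' : Lam} (hb : Beta M M') :
    ∀ {s : ℕ} {Γ : Ctx} {τ : Ty}, TT s Γ M' (Sum.inl τ) →
      ∃ s', TT s' Γ M (Sum.inl τ) := by
  induction hb with
  | beta U V =>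
    intro s Γ τ h
    obtain ⟨L, Γ₀, Δ, s₁, t, rfl, d, e⟩ := antisubst U h
    exact ⟨s₁ + 1 + t + 1, TT.app (TT.lam d) e⟩
  | appL N hb ih =>
    intro s Γ τ h
    obtain ⟨s₁, t, Γ₁, Γ₂, L, rfl, rfl, h1, h2⟩ := inv_app h
    obtain ⟨s₁', g1⟩ := ih h1
    exact ⟨s₁' + t + 1, TT.app g1 h2⟩
  | appR M hb ih =>
    intro s Γ τ h
    obtain ⟨s₁, t, Γ₁, Γ₂, L, rfl, rfl, h1, h2⟩ := inv_app h
    obtain ⟨t', g2⟩ := tt_inr_of_inl (fun hx => ih hx) h2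
    exact ⟨s₁ + t' + 1, TT.app h1 g2⟩
  | lam hb ih =>
    intro s Γ τ h
    obtain ⟨s₀, L', τ₀, rfl, rfl, h3⟩ := inv_lam h
    obtain ⟨s', g⟩ := ih h3
    exact ⟨s' + 1, TT.lam g⟩

theorem typable_beta {M N : Lam} (hb : Beta M N) : Typable M ↔ Typable N := by
  constructor
  · rintro ⟨s, Γ, τ, h⟩
    obtain ⟨s', h'⟩ := sr_beta hb h
    exact ⟨s', Γ, τ, h'⟩
  · rintro ⟨s, Γ, τ, h⟩
    obtain ⟨s', h'⟩ := se_beta hb h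
    exact ⟨s', Γ, τ, h'⟩

theorem typable_conv {M N : Lam} (h : BetaConv M N) : Typable M ↔ Typable N := by
  induction h with
  | rel a b hab => exact typable_beta hab
  | refl a => exact Iff.rfl
  | symm a b _ ih => exact ih.symm
  | trans a b c _ _ ih1 ih2 => exact ih1.trans ih2

/-- Strict subject reduction along head steps. -/
theorem srh {M M' : Lam} (hb : HB M M') :
    ∀ {s : ℕ} {Γ : Ctx} {τ : Ty}, TT s Γ M (Sum.inl τ) →
      ∃ s' < s, TT s' Γ M' (Sum.inl τ) := by
  induction hb with
  | beta U V =>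
    intro s Γ τ h
    obtain ⟨s₁, t, Γ₁, Γ₂, L, rfl, rfl, h1, h2⟩ := inv_app h
    obtain ⟨s₀, L', τ₀, heq, rfl, h3⟩ := inv_lam h1
    obtain ⟨e1, e2⟩ := Ty.arr.inj heq
    subst e1; subst e2
    obtain ⟨s', hle, d⟩ := subst_typing h3 (insC_apply_self 0 (↑L) Γ₁) h2
    rw [remC_insC] at d
    exact ⟨s', by omega, d⟩
  | app N hne hb ih =>
    intro s Γ τ h
    obtain ⟨s₁, t, Γ₁, Γ₂, L, rfl, rfl, h1, h2⟩ := inv_app h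
    obtain ⟨s₁', hlt, g1⟩ := ih h1
    exact ⟨s₁' + t + 1, by omega, TT.app g1 h2⟩
  | lam hb ih =>
    intro s Γ τ h
    obtain ⟨s₀, L', τ₀, rfl, rfl, h3⟩ := inv_lam h
    obtain ⟨s', hlt, g⟩ := ih h3
    exact ⟨s' + 1, by omega, TT.lam g⟩

theorem head_terminates : ∀ (s : ℕ) (M : Lam) (Γ : Ctx) (τ : Ty),
    TT s Γ M (Sum.inl τ) → ∃ n H, HBN n M H ∧ IsHnf H := by
  intro s
  induction s using Nat.strong_induction_on with
  | _ s ih =>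
    intro M Γ τ h
    rcases hnf_or_step M with hM | ⟨M', hstep⟩
    · exact ⟨0, M, HBN.zero M, hM⟩
    · obtain ⟨s', hlt, h'⟩ := srh hstep h
      obtain ⟨n, H, hn, hH⟩ := ih s' hlt M' Γ τ h'
      exact ⟨n + 1, H, HBN.succ hstep hn, hH⟩

theorem typable_iComb : Typable iComb := by
  refine ⟨2, 0, Ty.arr [Ty.atom] Ty.atom, ?_⟩
  have h : TT 1 (insC 0 (↑([Ty.atom] : List Ty)) 0) (var 0) (Sum.inl Ty.atom) := by
    rw [insC_singleton_list]
    exact TT.var 0 Ty.atom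
  exact TT.lam h

theorem typable_appList_head {M : Lam} {As : List Lam}
    (h : Typable (appList M As)) : Typable M := by
  induction As generalizing M with
  | nil => exact h
  | cons A As ih =>
    obtain ⟨s, Γ, τ, hM⟩ := ih h
    obtain ⟨s₁, t, Γ₁, Γ₂, L, _, _, h1, _⟩ := inv_app hM
    exact ⟨s₁, Γ₁, _, h1⟩

theorem typable_absN_body {Z : Lam} : ∀ (r : ℕ), Typable (absN r Z) → Typable Z := by
  intro r
  induction r with
  | zero => exact id
  | succ r ih =>
    rintro ⟨s, Γ, τ, h⟩
    obtain ⟨s₀, L', τ₀, _, _, h3⟩ := inv_lam h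
    exact ih ⟨s₀, _, τ₀, h3⟩

theorem solvable_typable {Z : Lam} (h : Solvable Z) : Typable Z := by
  obtain ⟨Ns, hNs, hconv⟩ := h
  have h1 : Typable (appList (close Z) Ns) := (typable_conv hconv).2 typable_iComb
  have h2 : Typable (close Z) := typable_appList_head h1
  exact typable_absN_body (fvBound Z) h2

theorem solvable_hbn {Z : Lam} (h : Solvable Z) :
    ∃ n H, HBN n Z H ∧ IsHnf H := by
  obtain ⟨s, Γ, τ, hT⟩ := solvable_typable h
  exact head_terminates s Z Γ τ hT

theorem unsolvable_omega : ¬ Solvable Omega := by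
  intro h
  obtain ⟨n, H, hn, hH⟩ := solvable_hbn h
  rw [hbn_omega hn] at hH
  exact not_isHnf_omega hH
/-! ### Section 5: the context lemma -/

theorem siz_pos : ∀ M : Lam, 0 < siz M
  | var _ => Nat.one_pos
  | app A B => by simp [siz]
  | lam M => by simp [siz]

theorem hbn_bstar {n : ℕ} {M H : Lam} (h : HBN n M H) : BetaStar M H := by
  induction h with
  | zero => exact bstar_refl _
  | succ h1 _ ih => exact bstar_trans (bstar_of_beta (hb_beta h1)) ih

theorem solvable_of_hbn_hnf {n : ℕ} {M H : Lam} (h : HBN n M H) (hH : IsHnf H) :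
    Solvable M :=
  (solvable_bstar (hbn_bstar h)).2 (solvable_hnf hH)

theorem context_lemma {P Q : Lam} (hP : Closed P) (hQ : Closed Q)
    (hyp : ∀ As : List Lam, (∀ A ∈ As, Closed A) →
      Solvable (appList P As) → Solvable (appList Q As)) :
    ∀ (n : ℕ) (W : Lam) (k : ℕ) (Ms : List Lam) (H : Lam),
      HBN n (appList (subst k P W) (Ms.map (subst k P))) H → IsHnf H →
      Solvable (appList (subst k Q W) (Ms.map (subst k Q))) := by
  intro n
  induction n using Nat.strong_induction_on with
  | _ n ihn =>
  suffices main : ∀ (sz : ℕ) (W : Lam), siz W ≤ sz → ∀ (k : ℕ) (Ms : List Lam) (H : Lam),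
      HBN n (appList (subst k P W) (Ms.map (subst k P))) H → IsHnf H →
      Solvable (appList (subst k Q W) (Ms.map (subst k Q))) by
    intro W k Ms H h1 h2
    exact main (siz W) W le_rfl k Ms H h1 h2
  intro sz
  induction sz using Nat.strong_induction_on with
  | _ sz ihsz =>
  intro W hszW k Ms H hred hH
  cases W with
  | var j =>
    by_cases hjk : j = k
    · -- the hole is at the head
      rw [subst_var_eq P hjk] at hred
      rw [subst_var_eq Q hjk]
      cases Ms with
      | nil =>
        simp only [List.map_nil] at hred ⊢
        have hsolP : Solvable P := solvable_of_hbn_hnf hred hH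
        have := hyp [] (by simp) (by simpa [appList] using hsolP)
        simpa [appList] using this
      | cons M Ms' =>
        by_cases hPlam : ∃ B, P = lam B
        · -- P is an abstraction: contract the head redex
          obtain ⟨B, rfl⟩ := hPlam
          have hB1 : ClosedUnder 1 B := hP
          have hstep' : HB (appList (lam B) ((M :: Ms').map (subst k (lam B))))
              (appList (subst 0 (subst k (lam B) M) B) (Ms'.map (subst k (lam B)))) := by
            show HB (appList (app (lam B) (subst k (lam B) M)) (Ms'.map (subst k (lam B)))) _
            exact hb_appList (HB.beta B (subst k (lam B) M)) (fun U h => by cases h) _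
          obtain ⟨n', rfl, hred'⟩ := hbn_split hred hH hstep'
          have hcomm : subst 0 (subst k (lam B) M) B = subst k (lam B) (subst 0 M B) := by
            have := subst_subst_closed hP B M 0 k (Nat.zero_le k)
            rwa [subst_eq_of_cu hB1 (by omega : 1 ≤ k + 1)] at this
          rw [hcomm] at hred'
          have hsol := ihn n' (by omega) (subst 0 M B) k Ms' H hred' hH
          have hcommQ : subst k Q (subst 0 M B) = subst 0 (subst k Q M) B := by
            have := subst_subst_closed hQ B M 0 k (Nat.zero_le k)
            rw [subst_eq_of_cu hB1 (by omega : 1 ≤ k + 1)] at this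
            exact this.symm
          rw [hcommQ] at hsol
          have hexp : Beta (appList (app (lam B) (subst k Q M)) (Ms'.map (subst k Q)))
              (appList (subst 0 (subst k Q M) B) (Ms'.map (subst k Q))) :=
            hb_beta (hb_appList (HB.beta B (subst k Q M)) (fun U h => by cases h) _)
          have hsolP' : Solvable (appList (lam B) ((M :: Ms').map (subst k Q))) := by
            show Solvable (appList (app (lam B) (subst k Q M)) (Ms'.map (subst k Q)))
            exact (solvable_beta hexp).2 hsol
          exact head_swap hP hQ hyp _ hsolP'
        · -- P is not an abstraction: it must have a head step
          have hne : ∀ U, P ≠ lam U := fun U h => hPlam ⟨U, h⟩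
          rcases hnf_or_step P with hPn | ⟨P₁, hPstep⟩
          · obtain ⟨B, hB⟩ := closed_hnf_is_lam hP hPn
            exact absurd ⟨B, hB⟩ hPlam
          · have hstep' : HB (appList P ((M :: Ms').map (subst k P)))
                (appList P₁ ((M :: Ms').map (subst k P))) :=
              hb_appList hPstep hne _
            obtain ⟨n', rfl, hred'⟩ := hbn_split hred hH hstep'
            have hP₁ : Closed P₁ := beta_cu (hb_beta hPstep) hP
            have hred'' : HBN n' (appList (subst k P (appList P₁ (M :: Ms')))
                (([] : List Lam).map (subst k P))) H := by
              simp only [List.map_nil]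
              rw [subst_appList, subst_closed hP₁]
              show HBN n' (appList P₁ ((M :: Ms').map (subst k P))) H
              exact hred'
            have hsol := ihn n' (by omega) (appList P₁ (M :: Ms')) k [] H hred'' hH
            simp only [List.map_nil] at hsol
            rw [subst_appList, subst_closed hP₁] at hsol
            have hyp' : ∀ As : List Lam, (∀ A ∈ As, Closed A) →
                Solvable (appList P₁ As) → Solvable (appList Q As) := by
              intro As hAs hs
              refine hyp As hAs ?_
              have hstep2 : BetaStar (appList P As) (appList P₁ As) :=
                bstar_appList As (bstar_of_beta (hb_beta hPstep))
              exact (solvable_bstar hstep2).2 hs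
            exact head_swap hP₁ hQ hyp' _ hsol
    · -- the head is another variable: always solvable
      by_cases hlt : k < j
      · rw [subst_var_gt Q hlt]
        exact solvable_var_spine _ _
      · rw [subst_var_lt Q (by omega)]
        exact solvable_var_spine _ _
  | app W₁ W₂ =>
    have hred' : HBN n (appList (subst k P W₁) ((W₂ :: Ms).map (subst k P))) H := hred
    have hsol := ihsz (siz W₁) (by have h1 := siz_pos W₂; simp [siz] at hszW; omega)
      W₁ le_rfl k (W₂ :: Ms) H hred' hH
    exact hsol
  | lam W₁ =>
    rw [subst_lam_closed hP] at hred
    rw [subst_lam_closed hQ]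
    cases Ms with
    | nil =>
      simp only [List.map_nil] at hred ⊢
      obtain ⟨H₁, rfl, hred₁, hH₁⟩ := hbn_lam hred hH
      have hsol := ihsz (siz W₁) (by simp [siz] at hszW; omega) W₁ le_rfl (k + 1) [] H₁
        (by simpa [appList] using hred₁) hH₁
      simp only [List.map_nil] at hsol
      show Solvable (lam (subst (k + 1) Q W₁))
      exact solvable_lam_iff.2 hsol
    | cons M Ms' =>
      have hstep' : HB (appList (lam (subst (k + 1) P W₁)) ((M :: Ms').map (subst k P)))
          (appList (subst 0 (subst k P M) (subst (k + 1) P W₁)) (Ms'.map (subst k P))) := by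
        show HB (appList (app (lam (subst (k + 1) P W₁)) (subst k P M)) _) _
        exact hb_appList (HB.beta _ _) (fun U h => by cases h) _
      obtain ⟨n', rfl, hred'⟩ := hbn_split hred hH hstep'
      have hcomm : subst 0 (subst k P M) (subst (k + 1) P W₁) =
          subst k P (subst 0 M W₁) := subst_subst_closed hP W₁ M 0 k (Nat.zero_le k)
      rw [hcomm] at hred'
      have hsol := ihn n' (by omega) (subst 0 M W₁) k Ms' H hred' hH
      have hcommQ : subst k Q (subst 0 M W₁) =
          subst 0 (subst k Q M) (subst (k + 1) Q W₁) :=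
        (subst_subst_closed hQ W₁ M 0 k (Nat.zero_le k)).symm
      rw [hcommQ] at hsol
      have hexp : Beta (appList (app (lam (subst (k + 1) Q W₁)) (subst k Q M))
          (Ms'.map (subst k Q)))
          (appList (subst 0 (subst k Q M) (subst (k + 1) Q W₁)) (Ms'.map (subst k Q))) :=
        hb_beta (hb_appList (HB.beta _ _) (fun U h => by cases h) _)
      show Solvable (appList (app (lam (subst (k + 1) Q W₁)) (subst k Q M))
        (Ms'.map (subst k Q)))
      exact (solvable_beta hexp).2 hsol
/-! ### Section 6: assembling the main theorem -/

/-- Applicative solvability equivalence for closed terms. -/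
def AppEq (M N : Lam) : Prop :=
  ∀ As : List Lam, (∀ A ∈ As, Closed A) →
    (Solvable (appList M As) ↔ Solvable (appList N As))

theorem appEq_symm {M N : Lam} (h : AppEq M N) : AppEq N M :=
  fun As hAs => (h As hAs).symm

theorem appEq_trans {M N R : Lam} (h1 : AppEq M N) (h2 : AppEq N R) : AppEq M R :=
  fun As hAs => (h1 As hAs).trans (h2 As hAs)

theorem map_subst_closed {As : List Lam} (k : ℕ) (R : Lam)
    (hAs : ∀ A ∈ As, Closed A) : As.map (subst k R) = As := by
  induction As with
  | nil => rfl
  | cons A As ih =>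
    simp only [List.map_cons]
    rw [subst_closed (hAs A List.mem_cons_self),
      ih (fun B hB => hAs B (List.mem_cons_of_mem A hB))]

/-- Congruence of applicative equivalence: substitution into any context. -/
theorem appEq_subst {M N : Lam} (hM : Closed M) (hN : Closed N) (h : AppEq M N)
    (X : Lam) : AppEq (subst 0 M X) (subst 0 N X) := by
  have half : ∀ {M N : Lam}, Closed M → Closed N → AppEq M N →
      ∀ As, (∀ A ∈ As, Closed A) →
      Solvable (appList (subst 0 M X) As) → Solvable (appList (subst 0 N X) As) := by
    intro M N hM hN h As hAs hsol
    have hmapM : As.map (subst 0 M) = As := map_subst_closed 0 M hAs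
    have hmapN : As.map (subst 0 N) = As := map_subst_closed 0 N hAs
    obtain ⟨n, H, hn, hH⟩ := solvable_hbn hsol
    rw [← hmapM] at hn
    have := context_lemma hM hN (fun Bs hBs => (h Bs hBs).1) n X 0 As H hn hH
    rwa [hmapN] at this
  intro As hAs
  exact ⟨half hM hN h As hAs, half hN hM (appEq_symm h) As hAs⟩

theorem closed_Omega : Closed Omega := by
  simp [Omega, omegaComb, Closed, ClosedUnder]

theorem homega_closed {M N : Lam} (h : HOmega M N) : Closed M ∧ Closed N := by
  induction h with
  | refl M hM => exact ⟨hM, hM⟩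
  | wbetaL U N hc => exact ⟨hc, cu_subst hc.1 hc.2 le_rfl⟩
  | wbetaR U N hc => exact ⟨cu_subst hc.1 hc.2 le_rfl, hc⟩
  | unsolvL M hc _ => exact ⟨hc, closed_Omega⟩
  | unsolvR M hc _ => exact ⟨closed_Omega, hc⟩
  | leibnitz X Y M N hX hY hM hN _ _ _ _ =>
    exact ⟨cu_subst (cu_mono hX le_rfl) hN le_rfl, cu_subst (cu_mono hY le_rfl) hN le_rfl⟩
  | omega_rule P Q hP hQ _ _ => exact ⟨hP, hQ⟩

theorem closed_app {A B : Lam} (h1 : Closed A) (h2 : Closed B) : Closed (app A B) := by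
  have : ClosedUnder 0 A ∧ ClosedUnder 0 B := ⟨h1, h2⟩
  exact this

theorem solvable_app_exists {P : Lam} (hP : Closed P) (h : Solvable P) :
    ∃ M, Closed M ∧ Solvable (app P M) := by
  rw [solvable_closed_iff hP] at h
  obtain ⟨Ns, hNs, hconv⟩ := h
  cases Ns with
  | nil =>
    refine ⟨iComb, closed_iComb, ?_⟩
    have hcl : Closed (app P iComb) := closed_app hP closed_iComb
    rw [solvable_closed_iff hcl]
    refine ⟨[], by simp, ?_⟩
    have h1 : BetaConv (app P iComb) (app iComb iComb) := bconv_appL _ hconv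
    have h2 : Beta (app iComb iComb) iComb := by
      have := Beta.beta (var 0) iComb
      simpa [subst, iComb] using this
    exact bconv_trans h1 (bconv_of_beta h2)
  | cons A Ns' =>
    have hA : Closed A := hNs A List.mem_cons_self
    refine ⟨A, hA, ?_⟩
    rw [solvable_closed_iff (closed_app hP hA)]
    exact ⟨Ns', fun B hB => hNs B (List.mem_cons_of_mem A hB), hconv⟩

theorem homega_appEq {M N : Lam} (h : HOmega M N) : AppEq M N := by
  induction h with
  | refl M hM => exact fun As hAs => Iff.rfl
  | wbetaL U N hc =>
    intro As hAs
    exact solvable_bstar (bstar_appList As (bstar_of_beta (Beta.beta U N)))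
  | wbetaR U N hc =>
    intro As hAs
    exact (solvable_bstar (bstar_appList As (bstar_of_beta (Beta.beta U N)))).symm
  | unsolvL M hc hns =>
    intro As hAs
    exact iff_of_false (fun hs => hns (solvable_appList_head hs))
      (fun hs => unsolvable_omega (solvable_appList_head hs))
  | unsolvR M hc hns =>
    intro As hAs
    exact iff_of_false (fun hs => unsolvable_omega (solvable_appList_head hs))
      (fun hs => hns (solvable_appList_head hs))
  | leibnitz X Y M N hX hY hM hN h1 h2 ih1 ih2 =>
    refine appEq_trans (appEq_subst hN hM (appEq_symm ih2) X)
      (appEq_trans ih1 (appEq_subst hM hN ih2 Y))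
  | omega_rule P Q hP hQ hyp ih =>
    intro As hAs
    cases As with
    | nil =>
      show Solvable P ↔ Solvable Q
      constructor
      · intro hs
        obtain ⟨M, hMc, hsM⟩ := solvable_app_exists hP hs
        have := (ih M hMc [] (by simp)).1 hsM
        exact solvable_app_head this
      · intro hs
        obtain ⟨M, hMc, hsM⟩ := solvable_app_exists hQ hs
        have := (ih M hMc [] (by simp)).2 hsM
        exact solvable_app_head this
    | cons A As' =>
      have hA : Closed A := hAs A List.mem_cons_self
      exact ih A hA As' (fun B hB => hAs B (List.mem_cons_of_mem A hB))

/-- Solvability is invariant under Hω-equality. -/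
theorem homega_solvable_iff (M N : Lam) (hM : Closed M) (hN : Closed N)
    (h : HOmega M N) : Solvable M ↔ Solvable N := by
  have := homega_appEq h [] (by simp)
  simpa [appList] using this

end Lam
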